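/- arXiv:2510.27142 — 6 statements merged into one kernel-verified Lean document; each statement's English description precedes it below -/
import Mathlib

section
/- (Pentagon identity for the q-exponential, Proposition 2.1.) With a and b as in the context, satisfying a∘b = q·(b∘a), one has the identity of ℂ-linear operators on ℂ[[x,y]]: e_q(−a) ∘ e_q(−b) = e_q(−b) ∘ e_q(−(b∘a)) ∘ e_q(−a). -/
/-!
Pentagon identity for the q-exponential (Proposition 2.1).

We work on `V = ℂ[[x,y]] = MvPowerSeries (Fin 2) ℂ`.  The operator `opB` is
multiplication by `y`, and `opA q` is multiplication by `x` composed with the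
rescaling `y ↦ q·y`; they satisfy `opA q ∘ opB = q • (opB ∘ opA q)` and are
degree-raising.  For a degree-raising operator `T`, the q-exponential
`e_q(−T) = ∑_{n≥0} (−1)ⁿ Tⁿ/(q;q)_n` has coefficientwise finite sums: its
coefficient at a monomial of total degree `d` only involves `n ≤ d`, which is
how `eqExp` is defined below.
-/

noncomputable section

/-- `(q;q)_n = ∏_{k=1}^{n} (1 - q^k)`. -/
def qPoch (q : ℂ) (n : ℕ) : ℂ := ∏ k ∈ Finset.range n, (1 - q ^ (k + 1))

/-- total degree of a monomial exponent -/
def degOf (ν : Fin 2 →₀ ℕ) : ℕ := ν.sum fun _ k => k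

/-- the rescaling `y ↦ q·y`, i.e. the coefficient at `ν` is multiplied by `q^(ν 1)`. -/
def scaleY (q : ℂ) (f : MvPowerSeries (Fin 2) ℂ) : MvPowerSeries (Fin 2) ℂ :=
  fun ν => q ^ (ν 1) * f ν

/-- `a`: multiplication by `x` composed with the rescaling `y ↦ q y`,
i.e. `(a·f)(x,y) = x·f(x,qy)`. -/
def opA (q : ℂ) (f : MvPowerSeries (Fin 2) ℂ) : MvPowerSeries (Fin 2) ℂ :=
  MvPowerSeries.X 0 * scaleY q f

/-- `b`: multiplication by `y`. -/
def opB (f : MvPowerSeries (Fin 2) ℂ) : MvPowerSeries (Fin 2) ℂ :=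
  MvPowerSeries.X 1 * f

/-- the q-exponential `e_q(−T) = ∑_{n ≥ 0} (−1)ⁿ Tⁿ / (q;q)_n` of a degree-raising
operator `T`, defined by its (finite) coefficientwise sums. -/
def eqExp (q : ℂ) (T : MvPowerSeries (Fin 2) ℂ → MvPowerSeries (Fin 2) ℂ)
    (f : MvPowerSeries (Fin 2) ℂ) : MvPowerSeries (Fin 2) ℂ :=
  fun ν => ∑ n ∈ Finset.range (degOf ν + 1), ((-1 : ℂ) ^ n / qPoch q n) * (T^[n] f) ν

/-!
Everything is computed coefficientwise. The iterates are `aᵐ f = xᵐ f(x, qᵐy)`, `bⁿ f = yⁿ f` and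
`(ba)ᵏ f = q^(k choose 2) (xy)ᵏ f(x, qᵏy)`, so with `c n = (-1)ⁿ / (q;q)ₙ` the coefficient of
`x^i y^j` on the left is `∑_{M,N} c M c N q^(M j) f_{i-M, j-N}`. On the right, grouping the terms
of the triple sum over `(n, k, m)` by `M = m + k`, `N = n + k` reduces the identity to the scalar
identity `∑ₖ c (N-k) c k c (M-k) q^(k choose 2) = c M c N q^(M N)`. Clearing q-factorials, this
is `∑ₖ (-1)ᵏ q^(k choose 2) [M k]_q [N k]_q (q;q)ₖ = q^(M N)`, proved by induction on `N`.
-/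

open Finset MvPowerSeries

theorem Nat.succ_choose_two (k : ℕ) : (k + 1).choose 2 = k.choose 2 + k := by
  rw [Nat.choose_succ_succ', Nat.choose_one_right, add_comm]

theorem qPoch_zero (q : ℂ) : qPoch q 0 = 1 := prod_range_zero _

theorem qPoch_succ (q : ℂ) (n : ℕ) : qPoch q (n + 1) = qPoch q n * (1 - q ^ (n + 1)) :=
  prod_range_succ _ _

section QAnalogues

variable {q : ℂ}

theorem one_sub_pow_ne_zero (hq : ∀ n : ℕ, 0 < n → q ^ n ≠ 1) {n : ℕ} (hn : 0 < n) :
    1 - q ^ n ≠ 0 :=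
  sub_ne_zero.2 (hq n hn).symm

theorem qPoch_ne_zero (hq : ∀ n : ℕ, 0 < n → q ^ n ≠ 1) (n : ℕ) : qPoch q n ≠ 0 :=
  prod_ne_zero_iff.2 fun k _ => one_sub_pow_ne_zero hq k.succ_pos

def qBinom (q : ℂ) (n k : ℕ) : ℂ :=
  if k ≤ n then qPoch q n / (qPoch q k * qPoch q (n - k)) else 0

theorem qBinom_of_lt {n k : ℕ} (h : n < k) : qBinom q n k = 0 := if_neg h.not_ge

theorem qBinom_zero_right (hq : ∀ n : ℕ, 0 < n → q ^ n ≠ 1) (n : ℕ) : qBinom q n 0 = 1 := by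
  simp [qBinom, qPoch_zero, qPoch_ne_zero hq]

theorem qBinom_self (hq : ∀ n : ℕ, 0 < n → q ^ n ≠ 1) (n : ℕ) : qBinom q n n = 1 := by
  simp [qBinom, qPoch_zero, qPoch_ne_zero hq]

theorem qBinom_succ_succ (hq : ∀ n : ℕ, 0 < n → q ^ n ≠ 1) (n k : ℕ) :
    qBinom q (n + 1) (k + 1) = qBinom q n k + q ^ (k + 1) * qBinom q n (k + 1) := by
  rcases lt_trichotomy k n with hk | rfl | hk
  · obtain ⟨j, rfl⟩ : ∃ j, n = k + (j + 1) := ⟨n - k - 1, by omega⟩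
    have e₁ : k + (j + 1) + 1 - (k + 1) = j + 1 := by omega
    have e₂ : k + (j + 1) - k = j + 1 := by omega
    have e₃ : k + (j + 1) - (k + 1) = j := by omega
    simp only [qBinom, if_pos (by omega : k + 1 ≤ k + (j + 1) + 1),
      if_pos (by omega : k ≤ k + (j + 1)), if_pos (by omega : k + 1 ≤ k + (j + 1)), e₁, e₂, e₃,
      qPoch_succ q (k + (j + 1)), qPoch_succ q k, qPoch_succ q j]
    have := qPoch_ne_zero hq k
    have := qPoch_ne_zero hq j
    have := one_sub_pow_ne_zero hq (Nat.succ_pos k)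
    have := one_sub_pow_ne_zero hq (Nat.succ_pos j)
    field_simp
    ring
  · simp [qBinom_self hq, qBinom_of_lt (Nat.lt_succ_self k)]
  · simp [qBinom_of_lt hk, qBinom_of_lt (Nat.succ_lt_succ hk),
      qBinom_of_lt (hk.trans (Nat.lt_succ_self k))]

theorem qBinom_succ_mul_qPoch_succ (hq : ∀ n : ℕ, 0 < n → q ^ n ≠ 1) (n k : ℕ) :
    qBinom q n (k + 1) * qPoch q (k + 1) = qBinom q n k * qPoch q k * (1 - q ^ (n - k)) := by
  rcases lt_or_ge k n with hk | hk
  · obtain ⟨j, rfl⟩ : ∃ j, n = k + (j + 1) := ⟨n - k - 1, by omega⟩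
    have e₁ : k + (j + 1) - (k + 1) = j := by omega
    have e₂ : k + (j + 1) - k = j + 1 := by omega
    simp only [qBinom, if_pos (by omega : k + 1 ≤ k + (j + 1)), if_pos (by omega : k ≤ k + (j + 1)),
      e₁, e₂, qPoch_succ q k, qPoch_succ q j]
    have := qPoch_ne_zero hq k
    have := qPoch_ne_zero hq j
    have := one_sub_pow_ne_zero hq (Nat.succ_pos k)
    have := one_sub_pow_ne_zero hq (Nat.succ_pos j)
    field_simp
  · simp [qBinom_of_lt (Nat.lt_succ_of_le hk), Nat.sub_eq_zero_of_le hk]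

theorem sum_qBinom_mul_qBinom_mul_qPoch_eq_pow (hq : ∀ n : ℕ, 0 < n → q ^ n ≠ 1) (M N : ℕ) :
    ∑ k ∈ range (N + 1), (-1) ^ k * q ^ k.choose 2 * (qBinom q M k * qBinom q N k * qPoch q k)
      = q ^ (M * N) := by
  let t : ℕ → ℕ → ℂ := fun N k =>
    (-1) ^ k * q ^ k.choose 2 * (qBinom q M k * qBinom q N k * qPoch q k)
  have t_zero : ∀ N, t N 0 = 1 := fun N => by simp [t, qBinom_zero_right hq, qPoch_zero]
  -- q-Pascal in `N` and absorption in `M` make the terms telescope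
  have t_succ : ∀ N k,
      t (N + 1) (k + 1) = q ^ M * t N k + (q ^ (k + 1) * t N (k + 1) - q ^ k * t N k) := by
    intro N k
    rcases le_or_gt k M with hkM | hkM
    · have hpow : q ^ k * q ^ (M - k) = q ^ M := by rw [← pow_add, Nat.add_sub_cancel' hkM]
      simp only [t, qBinom_succ_succ hq N k, Nat.succ_choose_two, pow_add, pow_succ]
      linear_combination (-1) ^ k * q ^ k.choose 2 * qBinom q N k * qBinom q M k * qPoch q k * hpow
        - (-1) ^ k * q ^ k.choose 2 * q ^ k * qBinom q N k * qBinom_succ_mul_qPoch_succ hq M k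
    · simp [t, qBinom_of_lt hkM, qBinom_of_lt (hkM.trans (Nat.lt_succ_self k))]
  have t_last : ∀ N, t N (N + 1) = 0 := fun N => by simp [t, qBinom_of_lt (Nat.lt_succ_self N)]
  change ∑ k ∈ range (N + 1), t N k = _
  induction N with
  | zero => simp [t_zero]
  | succ N ih =>
    rw [sum_range_succ', sum_congr rfl fun k _ => t_succ N k, sum_add_distrib, ← mul_sum,
      sum_range_sub (fun k => q ^ k * t N k), ih, t_zero, t_last, t_zero]
    ring

def eqCoeff (q : ℂ) (n : ℕ) : ℂ := (-1) ^ n / qPoch q n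

theorem eqCoeff_sub_mul_eqCoeff_mul_eqCoeff_sub (hq : ∀ n : ℕ, 0 < n → q ^ n ≠ 1) {M N k : ℕ}
    (hkM : k ≤ M) (hkN : k ≤ N) :
    eqCoeff q (N - k) * eqCoeff q k * eqCoeff q (M - k)
      = eqCoeff q M * eqCoeff q N * ((-1) ^ k * (qBinom q M k * qBinom q N k * qPoch q k)) := by
  obtain ⟨m, rfl⟩ := Nat.exists_eq_add_of_le hkM
  obtain ⟨n, rfl⟩ := Nat.exists_eq_add_of_le hkN
  simp only [eqCoeff, qBinom, if_pos hkM, if_pos hkN, Nat.add_sub_cancel_left]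
  have := qPoch_ne_zero hq k
  have := qPoch_ne_zero hq m
  have := qPoch_ne_zero hq n
  have := qPoch_ne_zero hq (k + m)
  have := qPoch_ne_zero hq (k + n)
  field_simp
  have hsq : ((-1 : ℂ) ^ k) ^ 2 = 1 := by rw [← pow_mul, pow_mul', neg_one_sq, one_pow]
  linear_combination (-(-1) ^ n * (-1) ^ m) * hsq

theorem sum_eqCoeff_mul_pow_choose_two (hq : ∀ n : ℕ, 0 < n → q ^ n ≠ 1) (M N : ℕ) :
    ∑ k ∈ range (min M N + 1), eqCoeff q (N - k) * eqCoeff q k * eqCoeff q (M - k) * q ^ k.choose 2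
      = eqCoeff q M * eqCoeff q N * q ^ (M * N) := by
  rw [← sum_qBinom_mul_qBinom_mul_qPoch_eq_pow hq M N, mul_sum,
    ← sum_subset (range_subset_range.2 (Nat.succ_le_succ (min_le_right M N)))]
  · refine sum_congr rfl fun k hk => ?_
    have hk' : k ≤ M ∧ k ≤ N := by simpa [Nat.lt_succ_iff] using hk
    rw [eqCoeff_sub_mul_eqCoeff_mul_eqCoeff_sub hq hk'.1 hk'.2]
    ring
  · intro k hkN hk
    have hMk : M < k := by simp at hkN hk; omega
    simp [qBinom_of_lt hMk]

end QAnalogues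

theorem sum_range_reindex_pentagon {β : Type*} [AddCommMonoid β] (a b : ℕ) (G : ℕ → ℕ → ℕ → β) :
    ∑ n ∈ range (b + 1), ∑ k ∈ range (min a (b - n) + 1), ∑ m ∈ range (a - k + 1), G n k m =
      ∑ M ∈ range (a + 1), ∑ N ∈ range (b + 1), ∑ k ∈ range (min M N + 1), G (N - k) k (M - k) := by
  simp_rw [sum_sigma']
  refine sum_nbij' (fun x => ⟨x.2.1 + x.2.2, x.1 + x.2.1, x.2.1⟩)
    (fun y => ⟨y.2.1 - y.2.2, y.2.2, y.1 - y.2.2⟩) ?_ ?_ ?_ ?_ ?_ <;>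
    simp only [mem_sigma, mem_range, Sigma.forall, Sigma.mk.injEq, heq_eq_eq, and_true,
      true_and] <;> intro _ _ _ _
  on_goal 5 => congr 1 <;> omega
  all_goals omega

theorem MvPowerSeries.rescale_X {σ R : Type*} [CommSemiring R] (a : σ → R) (s : σ) :
    rescale a (X s) = C (a s) * X s := by
  classical
  ext n
  simp only [coeff_rescale, coeff_X, coeff_C_mul, mul_ite, mul_one, mul_zero]
  split_ifs with h
  · simp [h]
  · rfl

theorem MvPowerSeries.rescale_C {σ R : Type*} [CommSemiring R] (a : σ → R) (c : R) :
    rescale a (C c) = C c := by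
  classical
  ext n
  simp only [coeff_rescale, coeff_C]
  split_ifs with h
  · simp [h]
  · simp

theorem MvPowerSeries.coeff_X_pow_mul {σ R : Type*} [CommSemiring R] (φ : MvPowerSeries σ R)
    (s : σ) (n : ℕ) (ν : σ →₀ ℕ) :
    coeff ν (X s ^ n * φ) = if n ≤ ν s then coeff (ν - Finsupp.single s n) φ else 0 := by
  simp only [X_pow_eq, coeff_monomial_mul, one_mul, Finsupp.single_le_iff]

section Operators

variable (q : ℂ)

theorem scaleY_eq_rescale (c : ℂ) (f : MvPowerSeries (Fin 2) ℂ) :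
    scaleY c f = rescale (Pi.mulSingle 1 c) f := by
  ext ν
  rw [coeff_rescale, Finsupp.prod_fintype _ _ (by simp), Fin.prod_univ_two]
  simp [scaleY, coeff_apply]

theorem opB_iterate (n : ℕ) (f : MvPowerSeries (Fin 2) ℂ) : opB^[n] f = X 1 ^ n * f := by
  induction n with
  | zero => simp
  | succ n ih => rw [Function.iterate_succ_apply', ih, opB, pow_succ', mul_assoc]

theorem opA_iterate (m : ℕ) (f : MvPowerSeries (Fin 2) ℂ) :
    (opA q)^[m] f = X 0 ^ m * scaleY (q ^ m) f := by
  induction m with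
  | zero => simp [scaleY_eq_rescale]
  | succ m ih =>
    rw [Function.iterate_succ_apply', ih, opA]
    simp only [scaleY_eq_rescale, map_mul, map_pow, rescale_X, rescale_rescale, ← Pi.mulSingle_mul,
      Pi.mulSingle_eq_of_ne zero_ne_one, map_one, one_mul, ← pow_succ]
    ring

theorem opB_comp_opA_iterate (k : ℕ) (f : MvPowerSeries (Fin 2) ℂ) :
    (opB ∘ opA q)^[k] f = C (q ^ k.choose 2) * (X 0 * X 1) ^ k * scaleY (q ^ k) f := by
  induction k with
  | zero => simp [scaleY_eq_rescale]
  | succ k ih =>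
    rw [Function.iterate_succ_apply', ih, Function.comp_apply, opA, opB]
    simp only [scaleY_eq_rescale, map_mul, map_pow, rescale_X, rescale_C, rescale_rescale,
      ← Pi.mulSingle_mul, Pi.mulSingle_eq_same, Pi.mulSingle_eq_of_ne zero_ne_one, map_one,
      one_mul, ← pow_succ, Nat.succ_choose_two]
    ring

theorem degOf_eq_add (ν : Fin 2 →₀ ℕ) : degOf ν = ν 0 + ν 1 := by
  rw [degOf, Finsupp.sum_fintype _ _ fun _ => rfl, Fin.sum_univ_two]

theorem coeff_opB_iterate (n : ℕ) (f : MvPowerSeries (Fin 2) ℂ) (ν : Fin 2 →₀ ℕ) :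
    coeff ν (opB^[n] f) = if n ≤ ν 1 then coeff (ν - Finsupp.single 1 n) f else 0 := by
  rw [opB_iterate, coeff_X_pow_mul]

theorem coeff_opA_iterate (m : ℕ) (f : MvPowerSeries (Fin 2) ℂ) (ν : Fin 2 →₀ ℕ) :
    coeff ν ((opA q)^[m] f)
      = if m ≤ ν 0 then q ^ (m * ν 1) * coeff (ν - Finsupp.single 0 m) f else 0 := by
  rw [opA_iterate, coeff_X_pow_mul]
  simp [scaleY, coeff_apply, pow_mul]

theorem coeff_opB_comp_opA_iterate (k : ℕ) (f : MvPowerSeries (Fin 2) ℂ) (ν : Fin 2 →₀ ℕ) :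
    coeff ν ((opB ∘ opA q)^[k] f) = if k ≤ ν 0 ∧ k ≤ ν 1 then
      q ^ (k.choose 2 + k * (ν 1 - k)) * coeff (ν - Finsupp.single 0 k - Finsupp.single 1 k) f
      else 0 := by
  rw [opB_comp_opA_iterate, mul_pow, mul_assoc, mul_assoc, coeff_C_mul, coeff_X_pow_mul,
    coeff_X_pow_mul]
  simp [scaleY, coeff_apply, pow_add, pow_mul, ite_and, mul_assoc]

theorem coeff_eqExp_eq_sum_range (T : MvPowerSeries (Fin 2) ℂ → MvPowerSeries (Fin 2) ℂ)
    (f : MvPowerSeries (Fin 2) ℂ) (ν : Fin 2 →₀ ℕ) {B : ℕ} (hB : B ≤ degOf ν)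
    (hT : ∀ n, B < n → coeff ν (T^[n] f) = 0) :
    coeff ν (eqExp q T f) = ∑ n ∈ range (B + 1), eqCoeff q n * coeff ν (T^[n] f) := by
  refine (sum_subset (range_subset_range.2 (by omega)) fun n _ hn => ?_).symm
  exact mul_eq_zero_of_right _ (hT n (by simpa using hn))

theorem coeff_eqExp_opB (f : MvPowerSeries (Fin 2) ℂ) (ν : Fin 2 →₀ ℕ) :
    coeff ν (eqExp q opB f)
      = ∑ n ∈ range (ν 1 + 1), eqCoeff q n * coeff (ν - Finsupp.single 1 n) f := by
  rw [coeff_eqExp_eq_sum_range q opB f ν (B := ν 1) (by rw [degOf_eq_add]; omega)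
    fun n hn => by rw [coeff_opB_iterate, if_neg (by omega)]]
  refine sum_congr rfl fun n hn => ?_
  rw [coeff_opB_iterate, if_pos (Nat.lt_succ_iff.1 (mem_range.1 hn))]

theorem coeff_eqExp_opA (f : MvPowerSeries (Fin 2) ℂ) (ν : Fin 2 →₀ ℕ) :
    coeff ν (eqExp q (opA q) f) = ∑ m ∈ range (ν 0 + 1),
      eqCoeff q m * (q ^ (m * ν 1) * coeff (ν - Finsupp.single 0 m) f) := by
  rw [coeff_eqExp_eq_sum_range q (opA q) f ν (B := ν 0) (by rw [degOf_eq_add]; omega)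
    fun n hn => by rw [coeff_opA_iterate, if_neg (by omega)]]
  refine sum_congr rfl fun m hm => ?_
  rw [coeff_opA_iterate, if_pos (Nat.lt_succ_iff.1 (mem_range.1 hm))]

theorem coeff_eqExp_opB_comp_opA (f : MvPowerSeries (Fin 2) ℂ) (ν : Fin 2 →₀ ℕ) :
    coeff ν (eqExp q (opB ∘ opA q) f) = ∑ k ∈ range (min (ν 0) (ν 1) + 1), eqCoeff q k *
      (q ^ (k.choose 2 + k * (ν 1 - k)) *
        coeff (ν - Finsupp.single 0 k - Finsupp.single 1 k) f) := by
  rw [coeff_eqExp_eq_sum_range q (opB ∘ opA q) f ν (B := min (ν 0) (ν 1))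
    (by rw [degOf_eq_add]; omega) fun n hn => by rw [coeff_opB_comp_opA_iterate, if_neg (by omega)]]
  refine sum_congr rfl fun k hk => ?_
  rw [coeff_opB_comp_opA_iterate, if_pos (by simp at hk; omega)]

theorem coeff_eqExp_opA_eqExp_opB (f : MvPowerSeries (Fin 2) ℂ) (ν : Fin 2 →₀ ℕ) :
    coeff ν (eqExp q (opA q) (eqExp q opB f)) =
      ∑ M ∈ range (ν 0 + 1), ∑ N ∈ range (ν 1 + 1), eqCoeff q M * eqCoeff q N * q ^ (M * ν 1) *
        coeff (ν - Finsupp.single 0 M - Finsupp.single 1 N) f := by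
  simp only [coeff_eqExp_opA, coeff_eqExp_opB, mul_sum, Finsupp.tsub_apply,
    Finsupp.single_eq_of_ne one_ne_zero, tsub_zero]
  exact sum_congr rfl fun M _ => sum_congr rfl fun N _ => by ring

theorem coeff_eqExp_opB_eqExp_opB_comp_opA_eqExp_opA (hq : ∀ n : ℕ, 0 < n → q ^ n ≠ 1)
    (f : MvPowerSeries (Fin 2) ℂ) (ν : Fin 2 →₀ ℕ) :
    coeff ν (eqExp q opB (eqExp q (opB ∘ opA q) (eqExp q (opA q) f))) =
      ∑ M ∈ range (ν 0 + 1), ∑ N ∈ range (ν 1 + 1), eqCoeff q M * eqCoeff q N * q ^ (M * ν 1) *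
        coeff (ν - Finsupp.single 0 M - Finsupp.single 1 N) f := by
  simp only [coeff_eqExp_opB, coeff_eqExp_opB_comp_opA, coeff_eqExp_opA, mul_sum,
    Finsupp.tsub_apply, Finsupp.single_eq_of_ne zero_ne_one, Finsupp.single_eq_of_ne one_ne_zero,
    Finsupp.single_eq_same, tsub_zero]
  rw [sum_range_reindex_pentagon]
  refine sum_congr rfl fun M hM => sum_congr rfl fun N hN => ?_
  obtain ⟨j, hj⟩ : ∃ j, ν 1 = N + j := ⟨ν 1 - N, by simp at hN; omega⟩
  calc _ = ∑ k ∈ range (min M N + 1),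
          eqCoeff q (N - k) * eqCoeff q k * eqCoeff q (M - k) * q ^ k.choose 2 *
            (q ^ (M * j) * coeff (ν - Finsupp.single 0 M - Finsupp.single 1 N) f) := by
        refine sum_congr rfl fun k hk => ?_
        obtain ⟨hkM, hkN⟩ : k ≤ M ∧ k ≤ N := by simpa [Nat.lt_succ_iff] using hk
        have hexp : ν 1 - (N - k) - k = j := by omega
        have harg : ν - Finsupp.single 1 (N - k) - Finsupp.single 0 k - Finsupp.single 1 k -
            Finsupp.single 0 (M - k) = ν - Finsupp.single 0 M - Finsupp.single 1 N := by
          ext i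
          fin_cases i <;> simp <;> omega
        obtain ⟨m, rfl⟩ := Nat.exists_eq_add_of_le hkM
        rw [hexp, harg, Nat.add_sub_cancel_left]
        ring
    _ = eqCoeff q M * eqCoeff q N * q ^ (M * ν 1) *
          coeff (ν - Finsupp.single 0 M - Finsupp.single 1 N) f := by
        rw [← sum_mul, sum_eqCoeff_mul_pow_choose_two hq, hj]
        ring

end Operators

theorem pentagon_identity_general (q : ℂ) (hq : ∀ n : ℕ, 0 < n → q ^ n ≠ 1) :
    eqExp q (opA q) ∘ eqExp q opB
      = eqExp q opB ∘ eqExp q (opB ∘ opA q) ∘ eqExp q (opA q) := by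
  funext f
  ext ν
  rw [Function.comp_apply, Function.comp_apply, Function.comp_apply, coeff_eqExp_opA_eqExp_opB,
    coeff_eqExp_opB_eqExp_opB_comp_opA_eqExp_opA q hq]

/-- **Pentagon identity** (Proposition 2.1):
`e_q(−a) ∘ e_q(−b) = e_q(−b) ∘ e_q(−(b∘a)) ∘ e_q(−a)`. -/
theorem pentagon_identity (q : ℂ) (hq0 : q ≠ 0) (hq : ∀ n : ℕ, 0 < n → q ^ n ≠ 1)
    (hab : opA q ∘ opB = fun f => q • opB (opA q f)) :
    eqExp q (opA q) ∘ eqExp q opB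
      = eqExp q opB ∘ eqExp q (opB ∘ opA q) ∘ eqExp q (opA q) :=
  pentagon_identity_general q hq
end
end

section
/- (Lemma of §2.3: factorization of the cyclic Jacobi matrix.) With the notation of the context, X = g · J_0(x_0) · d_n(vz) · g^{−1} · J_{n−1}(x_{n−1}) · J_{n−2}(x_{n−2}) ⋯ J_2(x_2) · J_1(x_1) as an identity of n×n matrices over R. -/
/-!
Lemma of §2.3: factorization of the cyclic Jacobi matrix
`X = g · J_0(x_0) · d_n(vz) · g⁻¹ · J_{n−1}(x_{n−1}) ⋯ J_1(x_1)`.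
Matrices are indexed by `Fin n` (0-based), so the paper's `E_{i,j}`
(rows/columns 1,…,n) is `single (i−1) (j−1) 1`.
-/

noncomputable section
open Matrix
open Fin.NatCast

/-- ascending product `F 0 * F 1 * ⋯ * F (k−1)`. -/
def prodAsc {M : Type*} [Monoid M] (F : ℕ → M) : ℕ → M
  | 0 => 1
  | k + 1 => prodAsc F k * F k

/-- descending product `F (k−1) * ⋯ * F 1 * F 0`. -/
def prodDesc {M : Type*} [Monoid M] (F : ℕ → M) : ℕ → M
  | 0 => 1
  | k + 1 => F k * prodDesc F k

variable {R : Type*} [CommRing R]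

/-- `J_k(c) := 1 + c·E_{k,k+1}` for `1 ≤ k ≤ n−1`. -/
def Jmat (n : ℕ) [NeZero n] (k : ℕ) (c : R) : Matrix (Fin n) (Fin n) R :=
  1 + c • single (((k - 1 : ℕ)) : Fin n) ((k : ℕ) : Fin n) (1 : R)

/-- `J_0(c) := 1 + c·z·E_{n,1}`. -/
def J0mat (n : ℕ) [NeZero n] (z c : R) : Matrix (Fin n) (Fin n) R :=
  1 + (c * z) • single (((n - 1 : ℕ)) : Fin n) ((0 : ℕ) : Fin n) (1 : R)

/-- `d_n(c) := 1 + c·E_{n,n}`. -/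
def dnmat (n : ℕ) [NeZero n] (c : R) : Matrix (Fin n) (Fin n) R :=
  1 + c • single (((n - 1 : ℕ)) : Fin n) (((n - 1 : ℕ)) : Fin n) (1 : R)

/-- the cyclic Jacobi matrix `X = 1 + ∑_{i=1}^{n−1} x_i E_{i,i+1} + x_0 z E_{n,1}`. -/
def Xmat (n : ℕ) [NeZero n] (x : Fin n → R) (z : R) : Matrix (Fin n) (Fin n) R :=
  1 + (∑ i ∈ Finset.range (n - 1),
        x ((i + 1 : ℕ) : Fin n) • single ((i : ℕ) : Fin n) ((i + 1 : ℕ) : Fin n) (1 : R))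
    + (x 0 * z) • single (((n - 1 : ℕ)) : Fin n) ((0 : ℕ) : Fin n) (1 : R)

/-!
Write `g = J_{n-2}(x_{n-2}) ⋯ J_1(x_1) = 1 + ∑_{j<n-2} x_{j+1} E_{j,j+1}`. The product
`J_0(x_0) d_n(vz)` is `1 + D` with `D` supported in the last row, and `g` fixes such matrices from
the left, so `g J_0(x_0) d_n(vz) g⁻¹ = 1 + D g⁻¹`. Moreover `J_{n-1}(x_{n-1}) g = X - x_0 z E_{n,1}`
and `g⁻¹ g = 1`, so the right-hand side is `X` plus `E_{n,n}` times
`z (v + x_0 x_{n-1} (g⁻¹)_{1,n-1})`. The first row of `g⁻¹` consists of the signed partial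
products `(-1)^j x_1 ⋯ x_j`, so this coefficient vanishes.
-/

/- The cast reduces the indices mod `n`; the lemmas below keep them `< n`. -/
def natSingle (R : Type*) [CommRing R] (n : ℕ) [NeZero n] (i j : ℕ) :
    Matrix (Fin n) (Fin n) R :=
  single (i : Fin n) (j : Fin n) 1

section NatSingle

variable {n : ℕ} [NeZero n]

lemma Fin.natCast_ne_natCast_of_lt {i j : ℕ} (hi : i < n) (hj : j < n) (h : i ≠ j) :
    (i : Fin n) ≠ (j : Fin n) := fun he => h <| by
  simpa [Fin.val_cast_of_lt hi, Fin.val_cast_of_lt hj] using congrArg Fin.val he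

lemma natSingle_mul_natSingle (i j l : ℕ) :
    natSingle R n i j * natSingle R n j l = natSingle R n i l := by
  simp [natSingle]

lemma natSingle_mul_natSingle_of_ne (i l : ℕ) {j k : ℕ} (hj : j < n) (hk : k < n) (h : j ≠ k) :
    natSingle R n i j * natSingle R n k l = 0 :=
  single_mul_single_of_ne _ _ _ _ (Fin.natCast_ne_natCast_of_lt hj hk h) _

lemma sum_smul_natSingle_mul_natSingle (i l : ℕ) (f : ℕ → R) {m k : ℕ} (hm : m ≤ n)
    (hk : k < m) :
    (∑ j ∈ Finset.range m, f j • natSingle R n i j) * natSingle R n k l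
      = f k • natSingle R n i l := by
  rw [Finset.sum_mul, Finset.sum_eq_single_of_mem k (Finset.mem_range.mpr hk)]
  · rw [smul_mul_assoc, natSingle_mul_natSingle]
  · intro j hj hjk
    rw [smul_mul_assoc, natSingle_mul_natSingle_of_ne _ _ (by grind) (by omega) hjk, smul_zero]

lemma Jmat_succ (k : ℕ) (c : R) : Jmat n (k + 1) c = 1 + c • natSingle R n k (k + 1) := by
  simp [Jmat, natSingle]

lemma Jmat_mul_Jmat_neg {k : ℕ} (hk : k + 1 < n) (c : R) :
    Jmat n (k + 1) c * Jmat n (k + 1) (-c) = 1 := by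
  rw [Jmat_succ, Jmat_succ, add_mul, one_mul, mul_add, mul_one, smul_mul_assoc, mul_smul_comm,
    natSingle_mul_natSingle_of_ne _ _ (by omega) (by omega) (by omega)]
  simp

end NatSingle

lemma prodDesc_mul_prodAsc {M : Type*} [Monoid M] {F G : ℕ → M} {m : ℕ}
    (h : ∀ j < m, F j * G j = 1) : prodDesc F m * prodAsc G m = 1 := by
  induction m with
  | zero => simp [prodDesc, prodAsc]
  | succ m ih =>
    rw [prodDesc, prodAsc, mul_assoc, ← mul_assoc (prodDesc F m), ih (fun j hj => h j (by omega)),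
      one_mul, h m (by omega)]

def signedProd (c : ℕ → R) (j : ℕ) : R := (-1) ^ j * ∏ t ∈ Finset.range j, c t

lemma signedProd_succ (c : ℕ → R) (j : ℕ) :
    signedProd c (j + 1) = -(signedProd c j * c j) := by
  rw [signedProd, signedProd, Finset.prod_range_succ, pow_succ]
  ring

section JacobiProducts

variable {n : ℕ} [NeZero n] (c : ℕ → R)

lemma prodDesc_Jmat {m : ℕ} (hm : m < n) :
    prodDesc (fun j => Jmat n (j + 1) (c j)) m
      = 1 + ∑ j ∈ Finset.range m, c j • natSingle R n j (j + 1) := by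
  induction m with
  | zero => simp [prodDesc]
  | succ m ih =>
    have hkill : natSingle R n m (m + 1) * ∑ j ∈ Finset.range m, c j • natSingle R n j (j + 1)
        = 0 := by
      rw [Finset.mul_sum]
      refine Finset.sum_eq_zero fun j hj => ?_
      rw [mul_smul_comm, natSingle_mul_natSingle_of_ne _ _ (by omega) (by grind) (by grind),
        smul_zero]
    rw [prodDesc, ih (by omega), Jmat_succ, add_mul, one_mul, mul_add, mul_one, smul_mul_assoc,
      hkill, smul_zero, add_zero, Finset.sum_range_succ]
    abel

lemma natSingle_mul_prodDesc_Jmat (i : ℕ) {k m : ℕ} (hk : k < n) (hmk : m ≤ k) :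
    natSingle R n i k * prodDesc (fun j => Jmat n (j + 1) (c j)) m = natSingle R n i k := by
  induction m with
  | zero => simp [prodDesc]
  | succ m ih =>
    rw [prodDesc, ← mul_assoc, Jmat_succ, mul_add, mul_one, mul_smul_comm,
      natSingle_mul_natSingle_of_ne _ _ hk (by omega) (by omega), smul_zero, add_zero,
      ih (by omega)]

lemma prodDesc_Jmat_mul_natSingle (l : ℕ) {k m : ℕ} (hk : k < n) (hmk : m < k) :
    prodDesc (fun j => Jmat n (j + 1) (c j)) m * natSingle R n k l = natSingle R n k l := by
  induction m with
  | zero => simp [prodDesc]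
  | succ m ih =>
    rw [prodDesc, mul_assoc, ih (by omega), Jmat_succ, add_mul, one_mul, smul_mul_assoc,
      natSingle_mul_natSingle_of_ne _ _ (by omega) hk (by omega), smul_zero, add_zero]

lemma natSingle_mul_prodAsc_Jmat_neg (i : ℕ) {m : ℕ} (hm : m < n) :
    natSingle R n i 0 * prodAsc (fun j => Jmat n (j + 1) (-c j)) m
      = ∑ j ∈ Finset.range (m + 1), signedProd c j • natSingle R n i j := by
  induction m with
  | zero => simp [prodAsc, signedProd]
  | succ m ih =>
    rw [prodAsc, ← mul_assoc, ih (by omega), Jmat_succ, mul_add, mul_one, mul_smul_comm,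
      sum_smul_natSingle_mul_natSingle _ _ _ (by omega) (by omega), smul_smul,
      Finset.sum_range_succ _ (m + 1), signedProd_succ, neg_mul, mul_comm]

lemma natSingle_mul_prodAsc_Jmat_neg_mul_natSingle (i l : ℕ) {m : ℕ} (hm : m < n) :
    natSingle R n i 0 * prodAsc (fun j => Jmat n (j + 1) (-c j)) m * natSingle R n m l
      = signedProd c m • natSingle R n i l := by
  rw [natSingle_mul_prodAsc_Jmat_neg c i hm,
    sum_smul_natSingle_mul_natSingle _ _ _ (by omega) (Nat.lt_succ_self m)]

lemma prodDesc_Jmat_mul_prodAsc_Jmat_neg {m : ℕ} (hm : m < n) :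
    prodDesc (fun j => Jmat n (j + 1) (c j)) m * prodAsc (fun j => Jmat n (j + 1) (-c j)) m = 1 :=
  prodDesc_mul_prodAsc fun j hj => Jmat_mul_Jmat_neg (by omega) (c j)

end JacobiProducts

lemma neg_one_pow_mul_prod_eq_signedProd {n : ℕ} [NeZero n] (x : Fin n → R) :
    (-1) ^ (n - 1) * ∏ i : Fin n, x i
      = x 0 * signedProd (fun j => x ((j + 1 : ℕ) : Fin n)) (n - 1) := by
  obtain ⟨m, rfl⟩ : ∃ m, n = m + 1 := ⟨n - 1, by have := NeZero.ne n; omega⟩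
  rw [Fin.prod_univ_succ, Nat.add_sub_cancel, signedProd,
    ← Fin.prod_univ_eq_prod_range (fun j => x ((j + 1 : ℕ) : Fin (m + 1))) m]
  have hshift (i : Fin m) : x ((i + 1 : ℕ) : Fin (m + 1)) = x i.succ :=
    congrArg x (Fin.ext (Fin.val_cast_of_lt (by omega)))
  simp only [hshift]
  ring

lemma Xmat_eq_prodDesc_Jmat_add {n : ℕ} [NeZero n] (x : Fin n → R) (z : R) :
    Xmat n x z = prodDesc (fun j => Jmat n (j + 1) (x ((j + 1 : ℕ) : Fin n))) (n - 1)
      + (x 0 * z) • natSingle R n (n - 1) 0 := by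
  rw [prodDesc_Jmat _ (Nat.sub_lt (Nat.pos_of_neZero n) Nat.one_pos), Xmat]
  rfl

def bottomCorners (R : Type*) [CommRing R] (n : ℕ) [NeZero n] (a b : R) :
    Matrix (Fin n) (Fin n) R :=
  a • natSingle R n (n - 1) 0 + b • natSingle R n (n - 1) (n - 1)

section BottomCorners

variable {n : ℕ} [NeZero n] (c : ℕ → R)

lemma bottomCorners_zero_right (a : R) : bottomCorners R n a 0 = a • natSingle R n (n - 1) 0 := by
  simp [bottomCorners]

lemma J0mat_mul_dnmat (hn : 2 ≤ n) (z a b : R) :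
    J0mat n z a * dnmat n b = 1 + bottomCorners R n (a * z) b := by
  change (1 + (a * z) • natSingle R n (n - 1) 0) * (1 + b • natSingle R n (n - 1) (n - 1)) = _
  rw [add_mul, one_mul, mul_add, mul_one, smul_mul_assoc, mul_smul_comm,
    natSingle_mul_natSingle_of_ne _ _ (by omega) (by omega) (by omega), smul_zero, smul_zero,
    add_zero, bottomCorners]
  abel

lemma prodDesc_Jmat_mul_bottomCorners {m : ℕ} (hm : m < n - 1) (a b : R) :
    prodDesc (fun j => Jmat n (j + 1) (c j)) m * bottomCorners R n a b = bottomCorners R n a b := by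
  rw [bottomCorners, mul_add, mul_smul_comm, mul_smul_comm,
    prodDesc_Jmat_mul_natSingle c 0 (by omega) hm,
    prodDesc_Jmat_mul_natSingle c (n - 1) (by omega) hm]

lemma bottomCorners_mul_prodAsc_Jmat_neg_mul_natSingle (hn : 2 ≤ n) (a b : R) :
    bottomCorners R n a b * prodAsc (fun j => Jmat n (j + 1) (-c j)) (n - 2)
        * natSingle R n (n - 2) (n - 1)
      = (a * signedProd c (n - 2)) • natSingle R n (n - 1) (n - 1) := by
  have hlast : natSingle R n (n - 1) (n - 1) * prodAsc (fun j => Jmat n (j + 1) (-c j)) (n - 2)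
      = natSingle R n (n - 1) (n - 1) := by
    conv_lhs => rw [← natSingle_mul_prodDesc_Jmat c (n - 1) (m := n - 2) (by omega) (by omega),
      mul_assoc, prodDesc_Jmat_mul_prodAsc_Jmat_neg c (by omega), mul_one]
  rw [bottomCorners, add_mul, add_mul, smul_mul_assoc, smul_mul_assoc, smul_mul_assoc,
    smul_mul_assoc, hlast, natSingle_mul_prodAsc_Jmat_neg_mul_natSingle c _ _ (by omega),
    natSingle_mul_natSingle_of_ne _ _ (by omega) (by omega) (by omega), smul_zero, add_zero,
    smul_smul]

/- Since `g⁻¹ g = 1`, only the off-diagonal part of `J_{n-1}` contributes, namely the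
`(0, n-2)` entry of `g⁻¹`, moved to the corner `(n-1, n-1)`. -/
lemma bottomCorners_mul_prodAsc_Jmat_neg_mul_prodDesc_Jmat (hn : 2 ≤ n) (a b : R) :
    bottomCorners R n a b * prodAsc (fun j => Jmat n (j + 1) (-c j)) (n - 2)
        * prodDesc (fun j => Jmat n (j + 1) (c j)) (n - 1)
      = bottomCorners R n a (b + c (n - 2) * a * signedProd c (n - 2)) := by
  have hinv := mul_eq_one_comm.mp (prodDesc_Jmat_mul_prodAsc_Jmat_neg c (by omega : n - 2 < n))
  rw [show n - 1 = n - 2 + 1 by omega, prodDesc, Jmat_succ, add_mul, one_mul, mul_add,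
    mul_assoc _ _ (prodDesc _ _), hinv, mul_one, smul_mul_assoc, mul_smul_comm, ← mul_assoc,
    show n - 2 + 1 = n - 1 by omega, bottomCorners_mul_prodAsc_Jmat_neg_mul_natSingle c hn,
    smul_mul_assoc, natSingle_mul_prodDesc_Jmat c _ (by omega) (by omega), bottomCorners,
    bottomCorners, smul_smul]
  module

end BottomCorners

/-- **Lemma (§2.3)**:
`X = g · J_0(x_0) · d_n(vz) · g⁻¹ · J_{n−1}(x_{n−1}) ⋯ J_2(x_2) · J_1(x_1)`
where `g = J_{n−2}(x_{n−2})⋯J_1(x_1)`, `g⁻¹ = J_1(−x_1)⋯J_{n−2}(−x_{n−2})`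
and `v = (−1)^{n−1} x_0 x_1 ⋯ x_{n−1}`. -/
theorem cyclic_matrix_factorization (n : ℕ) [NeZero n] (hn : 2 ≤ n)
    (x : Fin n → R) (z : R) :
    Xmat n x z
      = (prodDesc (fun j => Jmat n (j + 1) (x ((j + 1 : ℕ) : Fin n))) (n - 2))
        * J0mat n z (x 0)
        * dnmat n ((((-1 : R) ^ (n - 1)) * ∏ i : Fin n, x i) * z)
        * (prodAsc (fun j => Jmat n (j + 1) (-(x ((j + 1 : ℕ) : Fin n)))) (n - 2))
        * (prodDesc (fun j => Jmat n (j + 1) (x ((j + 1 : ℕ) : Fin n))) (n - 1)) := by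
  set c : ℕ → R := fun j => x ((j + 1 : ℕ) : Fin n)
  have hg := prodDesc_Jmat_mul_prodAsc_Jmat_neg c (by omega : n - 2 < n)
  have hv : x 0 * signedProd c (n - 1) * z + c (n - 2) * (x 0 * z) * signedProd c (n - 2) = 0 := by
    rw [show n - 1 = n - 2 + 1 by omega, signedProd_succ]
    ring
  rw [Xmat_eq_prodDesc_Jmat_add, neg_one_pow_mul_prod_eq_signedProd, mul_assoc _ (J0mat n z _),
    J0mat_mul_dnmat hn, mul_add, mul_one, prodDesc_Jmat_mul_bottomCorners c (by omega), add_mul,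
    hg, add_mul, one_mul, bottomCorners_mul_prodAsc_Jmat_neg_mul_prodDesc_Jmat c hn, hv,
    bottomCorners_zero_right]
end
end

section
/- (Basis property of the B_2 family, §3.2.) Under the stated hypotheses on q and Λ, the family {B_{2,i}(z,Λ)}_{i ∈ I_M}, regarded via the convention z_{N+1} := Λ·z_1 as polynomials in z_1,…,z_N, is a ℂ-basis of the space of homogeneous polynomials of total degree M in ℂ[z_1,…,z_N]; in particular it is linearly independent and |I_M| = binom(N+M−1, N−1) equals the dimension of that space. -/
/-!
Basis property of the `B₂` family (§3.2): for generic `Λ`, the polynomials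
`B_{2,i}(z,Λ)`, `i ∈ I_M`, form a ℂ-basis of the space of homogeneous
polynomials of total degree `M` in `ℂ[z_1,…,z_N]`.  Tuples `i ∈ I_M` are
encoded 0-based as `i : Fin N → ℕ` with `∑ i_a = M`
(`I_M = Finset.Nat.antidiagonalTuple N M`); the convention `z_{N+1} = Λ·z_1`
means that the successor of the last variable is `Λ·z_1` (and `z_1 = X 0`).
-/

noncomputable section
open scoped Classical
open MvPolynomial
open Fin.NatCast

/-- the successor variable: `z_{a+2}` if `a+1 < N`, and `z_{N+1} = Λ·z_1`
for the last index. -/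
def Xnext (Λ : ℂ) (N : ℕ) [NeZero N] (a : Fin N) : MvPolynomial (Fin N) ℂ :=
  if (a : ℕ) + 1 < N then X ((((a : ℕ) + 1 : ℕ)) : Fin N) else C Λ * X ((0 : ℕ) : Fin N)

/-- the homogeneous degree-`M` polynomial
`B_{2,i}(z,Λ) = ∏_{a=1}^{N} ∏_{k=0}^{i_a−1} (z_{a+1} − q^k z_a)`. -/
def B2poly (q Λ : ℂ) (N : ℕ) [NeZero N] (i : Fin N → ℕ) : MvPolynomial (Fin N) ℂ :=
  ∏ a : Fin N, ∏ k ∈ Finset.range (i a), (Xnext Λ N a - C (q ^ k) * X a)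

/-!
Evaluate at the points `z_a = q^{j_1+⋯+j_{a-1}}`, `j ∈ I_M`. There `z_{a+1} = q^{j_a} z_a`
for `a < N`, so `B_{2,i}` vanishes unless `i_a ≤ j_a` for all `a < N`, which on `I_M` forces
`i = j` or `i_1+⋯+i_{N-1} < j_1+⋯+j_{N-1}`. At `j = i` the factors are
`q^{i_1+⋯+i_{a-1}}(q^{i_a} − q^k)` with `k < i_a` and `Λ − q^m` with `m < M`, nonzero by the
hypotheses on `q` and `Λ`. This triangularity gives linear independence; the `B_{2,i}` are
homogeneous of degree `M` and there are as many of them as the dimension of that space, so they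
span it.
-/

open Finset

theorem Fintype.linearIndependent_of_triangular {ι R V α : Type*} [Fintype ι] [Ring R]
    [NoZeroDivisors R] [AddCommGroup V] [Module R V] [Preorder α] [WellFoundedLT α]
    (v : ι → V) (φ : ι → V →ₗ[R] R) (F : ι → α) (hdiag : ∀ i, φ i (v i) ≠ 0)
    (htri : ∀ i j, φ j (v i) ≠ 0 → i = j ∨ F i < F j) :
    LinearIndependent R v := by
  rw [Fintype.linearIndependent_iff]
  intro g hg j
  induction j using (InvImage.wf F wellFounded_lt).induction with
  | _ j ih =>
    have hj := congrArg (φ j) hg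
    rw [map_sum, map_zero, Finset.sum_eq_single j] at hj
    · rw [map_smul, smul_eq_mul] at hj
      exact (mul_eq_zero.1 hj).resolve_right (hdiag j)
    · intro i _ hij
      rw [map_smul, smul_eq_mul]
      by_cases hi : φ j (v i) = 0
      · rw [hi, mul_zero]
      · rw [ih i ((htri i j hi).resolve_left hij), zero_mul]
    · simp

theorem Finset.eq_or_sum_erase_lt_of_le {ι M : Type*} [Fintype ι] [DecidableEq ι]
    [AddCommMonoid M] [PartialOrder M] [IsOrderedCancelAddMonoid M] {i j : ι → M} (a₀ : ι)
    (hsum : ∑ a, i a = ∑ a, j a) (hle : ∀ a ≠ a₀, i a ≤ j a) :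
    i = j ∨ ∑ a ∈ univ.erase a₀, i a < ∑ a ∈ univ.erase a₀, j a := by
  have hle' : ∀ a ∈ univ.erase a₀, i a ≤ j a := fun a ha => hle a (ne_of_mem_erase ha)
  rcases (sum_le_sum hle').lt_or_eq with hlt | heq
  · exact Or.inr hlt
  refine Or.inl (funext fun a => ?_)
  by_cases ha : a = a₀
  · subst ha
    rw [← add_sum_erase _ _ (mem_univ a), ← add_sum_erase _ j (mem_univ a), heq] at hsum
    exact add_right_cancel hsum
  · exact (sum_eq_sum_iff_of_le hle').1 heq a (mem_erase.2 ⟨ha, mem_univ a⟩)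

theorem Finset.Nat.card_antidiagonalTuple (k n : ℕ) :
    #(Finset.Nat.antidiagonalTuple k n) = (k + n - 1).choose n := by
  conv_rhs => rw [← Fintype.card_fin k]
  rw [← Fintype.card_coe, ← Sym.card_sym_eq_choose]
  exact Fintype.card_congr ((Sym.equivNatSumOfFintype (Fin k) n).trans
    (Equiv.subtypeEquivRight fun _ => Finset.Nat.mem_antidiagonalTuple.symm)).symm

theorem MvPolynomial.finrank_homogeneousSubmodule_fin {R : Type*} [CommRing R] [Nontrivial R]
    (k n : ℕ) :
    Module.finrank R (homogeneousSubmodule (Fin k) R n) =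
      #(Finset.Nat.antidiagonalTuple k n) := by
  let b : Module.Basis {d : Fin k →₀ ℕ | d.degree = n} R (homogeneousSubmodule (Fin k) R n) :=
    (basisRestrictSupport R _).map
      (LinearEquiv.ofEq _ _ (homogeneousSubmodule_eq_finsupp_supported _ _ n).symm)
  rw [Module.finrank_eq_nat_card_basis b, ← Nat.card_eq_finsetCard]
  exact Nat.card_congr (Finsupp.equivFunOnFinite.subtypeEquiv fun d => by
    simp [Finsupp.degree_eq_sum, Finset.Nat.mem_antidiagonalTuple])

theorem pow_right_injective_of_pow_ne_one {M₀ : Type*} [MonoidWithZero M₀] [IsCancelMulZero M₀]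
    {q : M₀} (hq0 : q ≠ 0) (hq : ∀ m : ℕ, 0 < m → q ^ m ≠ 1) :
    Function.Injective (q ^ · : ℕ → M₀) := by
  intro m n h
  wlog hmn : m ≤ n generalizing m n
  · exact (this h.symm (le_of_not_ge hmn)).symm
  obtain ⟨d, rfl⟩ := Nat.exists_eq_add_of_le hmn
  have hd : q ^ d = 1 :=
    mul_left_cancel₀ (pow_ne_zero m hq0) (by simpa [pow_add] using h.symm)
  have : d = 0 := Nat.eq_zero_of_not_pos fun hpos => hq d hpos hd
  omega

namespace Fin

def prefixSum {N : ℕ} (j : Fin N → ℕ) (n : ℕ) : ℕ := ∑ b : Fin N with b.val < n, j b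

variable {N : ℕ} (j : Fin N → ℕ)

@[simp] theorem prefixSum_zero : prefixSum j 0 = 0 := by simp [prefixSum]

theorem prefixSum_val_succ (a : Fin N) : prefixSum j (a.val + 1) = prefixSum j a + j a := by
  have : univ.filter (fun b : Fin N => b.val < a.val + 1) =
      insert a (univ.filter fun b : Fin N => b.val < a.val) := by
    ext b
    simp only [mem_filter, mem_univ, true_and, mem_insert, Fin.ext_iff]
    omega
  rw [prefixSum, this, sum_insert (by simp), add_comm, prefixSum]

theorem prefixSum_self : prefixSum j N = ∑ a, j a := by simp [prefixSum]

end Fin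

def qPowPoint {N : ℕ} (q : ℂ) (j : Fin N → ℕ) : Fin N → ℂ := fun a => q ^ Fin.prefixSum j a

section B2poly

variable (q Λ : ℂ) {N : ℕ} [NeZero N]

theorem eval_qPowPoint_Xnext (j : Fin N → ℕ) (a : Fin N) :
    eval (qPowPoint q j) (Xnext Λ N a) =
      if a.val + 1 < N then q ^ Fin.prefixSum j (a.val + 1) else Λ := by
  unfold Xnext
  split_ifs with h
  · rw [eval_X, qPowPoint, Fin.val_cast_of_lt h]
  · simp [qPowPoint]

theorem eval_qPowPoint_B2poly (i j : Fin N → ℕ) :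
    eval (qPowPoint q j) (B2poly q Λ N i) =
      ∏ a, ∏ k ∈ range (i a),
        (eval (qPowPoint q j) (Xnext Λ N a) - q ^ (k + Fin.prefixSum j a)) := by
  simp only [B2poly, map_prod, map_sub, map_mul, eval_C, eval_X, qPowPoint, pow_add]

theorem le_of_eval_qPowPoint_B2poly_ne_zero {i j : Fin N → ℕ}
    (h : eval (qPowPoint q j) (B2poly q Λ N i) ≠ 0) (a : Fin N) (ha : a ≠ ⊤) : i a ≤ j a := by
  have hlast : a.val + 1 < N := by
    have := Fin.lt_def.1 (lt_top_iff_ne_top.2 ha)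
    rw [Fin.val_top] at this
    omega
  by_contra! hlt
  rw [eval_qPowPoint_B2poly] at h
  refine h (prod_eq_zero (mem_univ a) (prod_eq_zero (mem_range.2 hlt) ?_))
  rw [eval_qPowPoint_Xnext, if_pos hlast, Fin.prefixSum_val_succ, add_comm, sub_self]

theorem eval_qPowPoint_B2poly_self_ne_zero (hq0 : q ≠ 0) (hq : ∀ m : ℕ, 0 < m → q ^ m ≠ 1)
    (i : Fin N → ℕ) (hΛ : ∀ m : ℕ, m < ∑ a, i a → Λ ≠ q ^ m) :
    eval (qPowPoint q i) (B2poly q Λ N i) ≠ 0 := by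
  rw [eval_qPowPoint_B2poly, prod_ne_zero_iff]
  intro a _
  rw [prod_ne_zero_iff]
  intro k hk
  replace hk := mem_range.1 hk
  rw [eval_qPowPoint_Xnext, sub_ne_zero]
  split_ifs with hlast
  · rw [Fin.prefixSum_val_succ]
    intro h
    have := pow_right_injective_of_pow_ne_one hq0 hq h
    omega
  · have hsum : Fin.prefixSum i a + i a = ∑ a, i a := by
      rw [← Fin.prefixSum_val_succ, show a.val + 1 = N by omega, Fin.prefixSum_self]
    exact hΛ _ (by omega)

theorem isHomogeneous_Xnext (a : Fin N) : (Xnext Λ N a).IsHomogeneous 1 := by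
  unfold Xnext
  split_ifs
  · exact isHomogeneous_X ℂ _
  · simpa using (isHomogeneous_C _ Λ).mul (isHomogeneous_X ℂ ((0 : ℕ) : Fin N))

theorem isHomogeneous_B2poly (i : Fin N → ℕ) : (B2poly q Λ N i).IsHomogeneous (∑ a, i a) := by
  refine IsHomogeneous.prod _ _ _ fun a _ => ?_
  simpa using IsHomogeneous.prod (range (i a)) _ (fun _ => 1) fun k _ =>
    (isHomogeneous_Xnext Λ a).sub <| by
      simpa using (isHomogeneous_C _ (q ^ k)).mul (isHomogeneous_X ℂ a)

theorem linearIndependent_B2poly (hq0 : q ≠ 0) (hq : ∀ m : ℕ, 0 < m → q ^ m ≠ 1) (M : ℕ)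
    (hΛ : ∀ m : ℕ, m < M → Λ ≠ q ^ m) :
    LinearIndependent ℂ
      (fun i : {i : Fin N → ℕ // i ∈ Finset.Nat.antidiagonalTuple N M} => B2poly q Λ N i.1) := by
  have hsum (i : {i : Fin N → ℕ // i ∈ Finset.Nat.antidiagonalTuple N M}) : ∑ a, i.1 a = M :=
    Finset.Nat.mem_antidiagonalTuple.1 i.2
  refine Fintype.linearIndependent_of_triangular _
    (fun j => (aeval (qPowPoint q j.1)).toLinearMap) (fun i => ∑ a ∈ univ.erase ⊤, i.1 a)
    (fun i => eval_qPowPoint_B2poly_self_ne_zero q Λ hq0 hq i.1 fun m hm => hΛ m (hsum i ▸ hm))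
    (fun i j h => ?_)
  exact (Finset.eq_or_sum_erase_lt_of_le ⊤ ((hsum i).trans (hsum j).symm)
    (le_of_eval_qPowPoint_B2poly_ne_zero q Λ h)).imp_left Subtype.ext

end B2poly

theorem B2_basis_general (q : ℂ) (hq0 : q ≠ 0) (hq : ∀ m : ℕ, 0 < m → q ^ m ≠ 1)
    (N M : ℕ) [NeZero N] (Λ : ℂ) (hΛ : ∀ m : ℕ, m < M → Λ ≠ q ^ m) :
    LinearIndependent ℂ
      (fun i : {i : Fin N → ℕ // i ∈ Finset.Nat.antidiagonalTuple N M} =>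
        B2poly q Λ N i.1)
    ∧ Submodule.span ℂ
        (Set.range (fun i : {i : Fin N → ℕ // i ∈ Finset.Nat.antidiagonalTuple N M} =>
          B2poly q Λ N i.1))
      = MvPolynomial.homogeneousSubmodule (Fin N) ℂ M
    ∧ (Finset.Nat.antidiagonalTuple N M).card = Nat.choose (N + M - 1) (N - 1) := by
  have hli := linearIndependent_B2poly q Λ (N := N) hq0 hq M hΛ
  have hspan_le : Submodule.span ℂ (Set.range fun i : {i : Fin N → ℕ //
      i ∈ Finset.Nat.antidiagonalTuple N M} => B2poly q Λ N i.1) ≤ homogeneousSubmodule _ ℂ M :=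
    Submodule.span_le.2 <| Set.range_subset_iff.2 fun i => by
      simpa [Finset.Nat.mem_antidiagonalTuple.1 i.2] using isHomogeneous_B2poly q Λ i.1
  have : FiniteDimensional ℂ (homogeneousSubmodule (Fin N) ℂ M) :=
    Module.Finite.iff_fg.2 (homogeneousSubmodule_fg _ _ M)
  refine ⟨hli, Submodule.eq_of_le_of_finrank_le hspan_le ?_, ?_⟩
  · rw [finrank_span_eq_card hli, Fintype.card_coe, finrank_homogeneousSubmodule_fin]
  · rw [Finset.Nat.card_antidiagonalTuple, Nat.choose_symm_of_eq_add]
    have := Nat.pos_of_neZero N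
    omega

/-- **Basis property (§3.2)**: the family `{B_{2,i}}_{i∈I_M}` is linearly
independent, spans the homogeneous polynomials of degree `M`, and
`|I_M| = binom(N+M−1, N−1)` equals the dimension of that space. -/
theorem B2_basis (q : ℂ) (hq0 : q ≠ 0) (hq : ∀ m : ℕ, 0 < m → q ^ m ≠ 1)
    (N M : ℕ) [NeZero N] (Λ : ℂ) (hΛ0 : Λ ≠ 0) (hΛ : ∀ m : ℕ, m < M → Λ ≠ q ^ m) :
    LinearIndependent ℂ
      (fun i : {i : Fin N → ℕ // i ∈ Finset.Nat.antidiagonalTuple N M} =>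
        B2poly q Λ N i.1)
    ∧ Submodule.span ℂ
        (Set.range (fun i : {i : Fin N → ℕ // i ∈ Finset.Nat.antidiagonalTuple N M} =>
          B2poly q Λ N i.1))
      = MvPolynomial.homogeneousSubmodule (Fin N) ℂ M
    ∧ (Finset.Nat.antidiagonalTuple N M).card = Nat.choose (N + M - 1) (N - 1) :=
  B2_basis_general q hq0 hq N M Λ hΛ
end
end

section
/- (The affine gl_1 non-stationary equation and its solution, equation (1.17).) Let q, κ, d, d̄ ∈ ℂ with |q| < 1 and |κ| < 1, and set ρ := max(1, |d|, |d̄|, |d·d̄|). For every x ∈ ℂ with |x| < 1/ρ the series ∑_{n≥1} (1−d^n)(1−d̄^n)/(n·(1−q^n)·(1−κ^n)) · x^n converges absolutely; define ψ(x) := exp(−∑_{n≥1} (1−d^n)(1−d̄^n)/(n·(1−q^n)·(1−κ^n)) · x^n). Then for all x with |x| < 1/ρ one has ((x;q)_∞ · (d·d̄·x;q)_∞ / ((d·x;q)_∞ · (d̄·x;q)_∞)) · ψ(κx) = ψ(x); that is, ψ solves the gl_1 non-stationary equation H^{gl_1} ψ = ψ, where H^{gl_1} = (φ(x)·φ(dd̄x)/(φ(dx)·φ(d̄x)))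 · T_{κ,x} with φ(z) = (z;q)_∞ and T_{κ,x} the shift x ↦ κx. -/
/-!
Taking logarithms, `log (z;q)_∞ = ∑ₙ log (1 - z qⁿ) = -∑_{k≥1} zᵏ / (k (1 - qᵏ))` for `|z| < 1`
(expand each logarithm and sum the geometric series in `n`). The coefficient of `xᵏ` in
`-log ψ(x) + log ψ(κx)` is `(1 - dᵏ)(1 - d̄ᵏ)/(k (1 - qᵏ))`, because the factor `1 - κᵏ` cancels;
this is exactly the coefficient of `xᵏ` in `-log` of the prefactor `φ(x)φ(dd̄x)/(φ(dx)φ(d̄x))`.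
-/

noncomputable section

/-- the `n`-th term (indexed from `0`, corresponding to the summand `n+1`) of
the exponent series of `ψ`. -/
def glTerm (q κ d e x : ℂ) (n : ℕ) : ℂ :=
  (1 - d ^ (n + 1)) * (1 - e ^ (n + 1))
    / ((n + 1 : ℂ) * (1 - q ^ (n + 1)) * (1 - κ ^ (n + 1))) * x ^ (n + 1)

/-- `ψ(x) = exp(−∑_{n≥1} (1−dⁿ)(1−d̄ⁿ)/(n(1−qⁿ)(1−κⁿ)) xⁿ)`. -/
def glPsi (q κ d e x : ℂ) : ℂ := Complex.exp (-∑' n : ℕ, glTerm q κ d e x n)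

/-- `(z;q)_∞ = ∏_{n≥0}(1 − z qⁿ)`. -/
def qPochInf (z q : ℂ) : ℂ := ∏' n : ℕ, (1 - z * q ^ n)

section SeminormedRing

variable {R : Type*} [SeminormedRing R] [NormOneClass R] {a : R}

lemma one_sub_norm_le_norm_one_sub_pow_succ (ha : ‖a‖ ≤ 1) (n : ℕ) :
    1 - ‖a‖ ≤ ‖1 - a ^ (n + 1)‖ :=
  calc 1 - ‖a‖ ≤ 1 - ‖a‖ ^ (n + 1) := by
        gcongr; exact pow_le_of_le_one (norm_nonneg a) ha n.succ_ne_zero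
    _ ≤ ‖(1 : R)‖ - ‖a ^ (n + 1)‖ := by
        rw [norm_one]; gcongr; exact norm_pow_le' a n.succ_pos
    _ ≤ ‖1 - a ^ (n + 1)‖ := norm_sub_norm_le _ _

lemma one_sub_pow_succ_ne_zero (ha : ‖a‖ < 1) (n : ℕ) : 1 - a ^ (n + 1) ≠ 0 := by
  intro h
  have := one_sub_norm_le_norm_one_sub_pow_succ ha.le n
  rw [h, norm_zero] at this
  linarith

end SeminormedRing

lemma norm_mul_lt_one_of_norm_le {R : Type*} [SeminormedRing R] {a x : R} {ρ : ℝ}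
    (ha : ‖a‖ ≤ ρ) (hx : ‖x‖ < 1 / ρ) : ‖a * x‖ < 1 := by
  have hρ : 0 < ρ := one_div_pos.mp ((norm_nonneg x).trans_lt hx)
  calc ‖a * x‖ ≤ ‖a‖ * ‖x‖ := norm_mul_le a x
    _ ≤ ρ * ‖x‖ := by gcongr
    _ < ρ * (1 / ρ) := by gcongr
    _ = 1 := mul_one_div_cancel hρ.ne'

lemma Summable.norm_div_one_sub_pow_succ {𝕜 : Type*} [NormedDivisionRing 𝕜] {f : ℕ → 𝕜}
    {q : 𝕜} (hf : Summable fun n => ‖f n‖) (hq : ‖q‖ < 1) :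
    Summable fun n => ‖f n / (1 - q ^ (n + 1))‖ := by
  refine (hf.div_const (1 - ‖q‖)).of_nonneg_of_le (fun _ => norm_nonneg _) fun n => ?_
  rw [norm_div]
  exact div_le_div_of_nonneg_left (norm_nonneg _) (by linarith)
    (one_sub_norm_le_norm_one_sub_pow_succ hq.le n)

def negLogQPochTerm (q z : ℂ) (n : ℕ) : ℂ := z ^ (n + 1) / (n + 1) / (1 - q ^ (n + 1))

section QPochhammer

variable {q z : ℂ}

lemma summable_norm_negLogQPochTerm (hq : ‖q‖ < 1) (hz : ‖z‖ < 1) :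
    Summable fun n => ‖negLogQPochTerm q z n‖ :=
  Summable.norm_div_one_sub_pow_succ
    (summable_norm_iff.mpr (Complex.hasSum_taylorSeries_neg_log' hz).summable) hq

lemma norm_mul_pow_lt_one (hq : ‖q‖ < 1) (hz : ‖z‖ < 1) (n : ℕ) : ‖z * q ^ n‖ < 1 := by
  rw [norm_mul, norm_pow]
  exact mul_lt_one_of_nonneg_of_lt_one_left (norm_nonneg z) hz (pow_le_one₀ (norm_nonneg q) hq.le)

lemma summable_mul_pow_pow_succ_div (hq : ‖q‖ < 1) (hz : ‖z‖ < 1) :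
    Summable fun p : ℕ × ℕ => (z * q ^ p.1) ^ (p.2 + 1) / (p.2 + 1) := by
  refine Summable.of_norm_bounded ((summable_geometric_of_lt_one (norm_nonneg q) hq).mul_of_nonneg
    (summable_geometric_of_lt_one (norm_nonneg z) hz) (fun _ => by positivity)
    (fun _ => by positivity)) fun ⟨n, k⟩ => ?_
  have hzq : ‖z * q ^ n‖ ≤ ‖z‖ := by
    rw [norm_mul, norm_pow]
    exact mul_le_of_le_one_right (norm_nonneg z) (pow_le_one₀ (norm_nonneg q) hq.le)
  have hqz : ‖z * q ^ n‖ ≤ ‖q‖ ^ n := by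
    rw [norm_mul, norm_pow]
    exact mul_le_of_le_one_left (by positivity) hz.le
  calc ‖(z * q ^ n) ^ (k + 1) / (k + 1)‖ ≤ ‖(z * q ^ n) ^ (k + 1)‖ := by
        rw [norm_div]
        exact div_le_self (norm_nonneg _) (by exact_mod_cast (Nat.one_le_cast.mpr k.succ_pos))
    _ = ‖z * q ^ n‖ ^ k * ‖z * q ^ n‖ := by rw [norm_pow, pow_succ]
    _ ≤ ‖z‖ ^ k * ‖q‖ ^ n := by gcongr
    _ = ‖q‖ ^ n * ‖z‖ ^ k := mul_comm _ _

lemma hasSum_log_one_sub_mul_pow (hq : ‖q‖ < 1) (hz : ‖z‖ < 1) :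
    HasSum (fun n => Complex.log (1 - z * q ^ n)) (-∑' k, negLogQPochTerm q z k) := by
  obtain ⟨a, hf⟩ := summable_mul_pow_pow_succ_div hq hz
  have h_row (n : ℕ) : HasSum (fun k : ℕ => (z * q ^ n) ^ (k + 1) / (k + 1))
      (-Complex.log (1 - z * q ^ n)) :=
    Complex.hasSum_taylorSeries_neg_log' (norm_mul_pow_lt_one hq hz n)
  have h_cols : HasSum (negLogQPochTerm q z) a := by
    refine ((Equiv.prodComm ℕ ℕ).hasSum_iff.mpr hf).prod_fiberwise fun k => ?_
    have hqk : ‖q ^ (k + 1)‖ < 1 := by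
      rw [norm_pow]; exact pow_lt_one₀ (norm_nonneg q) hq k.succ_ne_zero
    rw [negLogQPochTerm, div_eq_mul_inv _ (1 - _)]
    refine ((hasSum_geometric_of_norm_lt_one hqk).mul_left _).congr_fun fun n => ?_
    simp only [Function.comp_apply, Equiv.prodComm_apply, Prod.fst_swap, Prod.snd_swap]
    ring
  rw [h_cols.tsum_eq]
  simpa only [neg_neg] using (hf.prod_fiberwise h_row).neg

lemma qPochInf_eq_exp (hq : ‖q‖ < 1) (hz : ‖z‖ < 1) :
    qPochInf z q = Complex.exp (-∑' k, negLogQPochTerm q z k) := by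
  have hne (n : ℕ) : 1 - z * q ^ n ≠ 0 :=
    sub_ne_zero.mpr fun h => (norm_mul_pow_lt_one hq hz n).ne (by rw [← h, norm_one])
  rw [qPochInf, ← (hasSum_log_one_sub_mul_pow hq hz).tsum_eq,
    Complex.cexp_tsum_eq_tprod hne (hasSum_log_one_sub_mul_pow hq hz).summable]

end QPochhammer

lemma glTerm_eq_div_one_sub_pow (q κ d e x : ℂ) (n : ℕ) :
    glTerm q κ d e x n = (negLogQPochTerm q x n - negLogQPochTerm q (d * x) n
      - negLogQPochTerm q (e * x) n + negLogQPochTerm q (d * e * x) n) / (1 - κ ^ (n + 1)) := by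
  simp only [glTerm, negLogQPochTerm, mul_pow, div_mul_eq_div_div]
  ring

section GlTerm

variable {q κ d e x : ℂ}

lemma glTerm_sub_glTerm_mul (hκ : ‖κ‖ < 1) (n : ℕ) :
    glTerm q κ d e x n - glTerm q κ d e (κ * x) n = negLogQPochTerm q x n
      - negLogQPochTerm q (d * x) n - negLogQPochTerm q (e * x) n
      + negLogQPochTerm q (d * e * x) n := by
  have hκn := one_sub_pow_succ_ne_zero hκ n
  simp only [glTerm_eq_div_one_sub_pow, negLogQPochTerm, mul_pow]
  field_simp

variable (hq : ‖q‖ < 1) (hκ : ‖κ‖ < 1) (hx : ‖x‖ < 1) (hdx : ‖d * x‖ < 1) (hex : ‖e * x‖ < 1)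
  (hdex : ‖d * e * x‖ < 1)
include hq hκ hx hdx hex hdex

lemma summable_norm_glTerm : Summable fun n => ‖glTerm q κ d e x n‖ := by
  have hL {w : ℂ} (hw : ‖w‖ < 1) := (summable_norm_negLogQPochTerm hq hw).of_norm
  simp only [glTerm_eq_div_one_sub_pow]
  exact Summable.norm_div_one_sub_pow_succ
    (summable_norm_iff.mpr ((((hL hx).sub (hL hdx)).sub (hL hex)).add (hL hdex))) hκ

lemma tsum_glTerm_mul : ∑' n, glTerm q κ d e (κ * x) n = ∑' n, glTerm q κ d e x n
    - (∑' n, negLogQPochTerm q x n - ∑' n, negLogQPochTerm q (d * x) n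
      - ∑' n, negLogQPochTerm q (e * x) n + ∑' n, negLogQPochTerm q (d * e * x) n) := by
  have hL {w : ℂ} (hw : ‖w‖ < 1) := (summable_norm_negLogQPochTerm hq hw).of_norm.hasSum
  refine HasSum.tsum_eq (((summable_norm_glTerm hq hκ hx hdx hex hdex).of_norm.hasSum.sub
    ((((hL hx).sub (hL hdx)).sub (hL hex)).add (hL hdex))).congr_fun fun n => ?_)
  rw [← glTerm_sub_glTerm_mul hκ]
  ring

end GlTerm

/-- **Equation (1.17)**: the exponent series of `ψ` converges absolutely for
`|x| < 1/ρ`, and `ψ` solves the gl₁ non-stationary equation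
`H^{gl₁} ψ = ψ`, i.e. `(φ(x)φ(dd̄x)/(φ(dx)φ(d̄x)))·ψ(κx) = ψ(x)`. -/
theorem gl1_equation (q κ d e : ℂ) (hq : ‖q‖ < 1) (hκ : ‖κ‖ < 1) :
    (∀ x : ℂ,
        ‖x‖ <
          1 / max (max 1 (‖d‖)) (max (‖e‖) (‖d * e‖)) →
        Summable fun n : ℕ => ‖glTerm q κ d e x n‖)
    ∧ (∀ x : ℂ,
        ‖x‖ <
          1 / max (max 1 (‖d‖)) (max (‖e‖) (‖d * e‖)) →
        qPochInf x q * qPochInf (d * e * x) q / (qPochInf (d * x) q * qPochInf (e * x) q)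
            * glPsi q κ d e (κ * x)
          = glPsi q κ d e x) := by
  set ρ := max (max 1 ‖d‖) (max ‖e‖ ‖d * e‖)
  have hnorms {x : ℂ} (hx : ‖x‖ < 1 / ρ) :
      ‖x‖ < 1 ∧ ‖d * x‖ < 1 ∧ ‖e * x‖ < 1 ∧ ‖d * e * x‖ < 1 := by
    refine ⟨?_, norm_mul_lt_one_of_norm_le (by simp [ρ]) hx,
      norm_mul_lt_one_of_norm_le (by simp [ρ]) hx, norm_mul_lt_one_of_norm_le (by simp [ρ]) hx⟩
    simpa using norm_mul_lt_one_of_norm_le (a := (1 : ℂ)) (by simp [ρ]) hx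
  refine ⟨fun x hx => ?_, fun x hx => ?_⟩
  all_goals obtain ⟨h1, hd, he, hde⟩ := hnorms hx
  · exact summable_norm_glTerm hq hκ h1 hd he hde
  rw [qPochInf_eq_exp hq h1, qPochInf_eq_exp hq hd, qPochInf_eq_exp hq he,
    qPochInf_eq_exp hq hde, glPsi, glPsi, tsum_glTerm_mul hq hκ h1 hd he hde,
    ← Complex.exp_add, ← Complex.exp_add, ← Complex.exp_sub, ← Complex.exp_add]
  congr 1
  ring
end
end

section
/- (Key identity underlying Lemma 5.1.) For every a ∈ ℤ/Nℤ one has U_a − x_a·U_{a+1} = x_a·(1 − Λ) and (1 − x'_{a+1})·x'_a = x_{a+1}·(1 − x'_a) in K; consequently, for every function ν : ℤ/Nℤ → ℤ, ∏_{a∈ℤ/Nℤ} ((1 − x'_{a+1})/(1 − x'_a))^{ν_a} · ∏_{a∈ℤ/Nℤ} (x'_a)^{ν_a} = ∏_{a∈ℤ/Nℤ} (x_{a+1})^{ν_a}. (This is the substitution identity expressing that the operator C^{−1}R of Lemma 5.1 intertwines the normal-ordered factor ∏_a (1−x_a)^{−θ'_a}.) -/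
/-!
Key identity underlying Lemma 5.1 (four-dimensional limit).  `K` is the field
of rational functions over ℚ in commuting indeterminates `x_a`, `a ∈ ℤ/Nℤ`;
`Λ = ∏_a x_a`, `U_a = x_a + x_a x_{a+1} + ⋯ + Λ` (the `N` partial products
beginning with `x_a`), and `x'_a = x_a·U_{a+1}/U_a`.
-/

noncomputable section

/-- the field of rational functions over ℚ in the variables `x_a`, `a ∈ ℤ/Nℤ`. -/
abbrev K (N : ℕ) := FractionRing (MvPolynomial (ZMod N) ℚ)

/-- the variable `x_a` viewed in `K`. -/
def xv (N : ℕ) (a : ZMod N) : K N :=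
  algebraMap (MvPolynomial (ZMod N) ℚ) (K N) (MvPolynomial.X a)

/-- `Λ = ∏_{a∈ℤ/Nℤ} x_a`. -/
def Lam (N : ℕ) [NeZero N] : K N := ∏ a : ZMod N, xv N a

/-- `U_a = ∑_{i=1}^{N} ∏_{j=0}^{i−1} x_{a+j} = x_a + x_a x_{a+1} + ⋯ + Λ`. -/
def U (N : ℕ) (a : ZMod N) : K N :=
  ∑ i ∈ Finset.range N, ∏ j ∈ Finset.range (i + 1), xv N (a + (j : ℕ))

/-- `x'_a = x_a·U_{a+1}/U_a`. -/
def xp (N : ℕ) (a : ZMod N) : K N := xv N a * U N (a + 1) / U N a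

lemma algebraMap_inj (N : ℕ) :
    Function.Injective (algebraMap (MvPolynomial (ZMod N) ℚ) (K N)) :=
  IsFractionRing.injective _ _

lemma xv_ne_zero (N : ℕ) (a : ZMod N) : xv N a ≠ 0 := by
  rw [xv, map_ne_zero_iff _ (algebraMap_inj N)]
  exact MvPolynomial.X_ne_zero (R := ℚ) a

def Up (N : ℕ) (a : ZMod N) : MvPolynomial (ZMod N) ℚ :=
  ∑ i ∈ Finset.range N, ∏ j ∈ Finset.range (i + 1), MvPolynomial.X (a + (j : ℕ))

lemma U_eq (N : ℕ) (a : ZMod N) : U N a = algebraMap _ (K N) (Up N a) := by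
  simp [U, Up, map_sum, map_prod, xv]

lemma Up_ne_zero (N : ℕ) [NeZero N] (a : ZMod N) : Up N a ≠ 0 := by
  intro h
  have h2 := congrArg (MvPolynomial.eval (fun _ => (1:ℚ))) h
  simp [Up, map_sum, map_prod] at h2
  exact NeZero.ne N (by exact_mod_cast h2)

lemma U_ne_zero (N : ℕ) [NeZero N] (a : ZMod N) : U N a ≠ 0 := by
  rw [U_eq, map_ne_zero_iff _ (algebraMap_inj N)]
  exact Up_ne_zero N a

lemma prod_range_xv (N : ℕ) [NeZero N] (a : ZMod N) :
    ∏ j ∈ Finset.range N, xv N (a + (j : ℕ)) = Lam N := by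
  rw [Lam, ← Fin.prod_univ_eq_prod_range (fun j => xv N (a + (j : ℕ)))]
  apply Fintype.prod_bijective (fun j : Fin N => a + ((j : ℕ) : ZMod N)) ?_ _ _ (fun _ => rfl)
  rw [Fintype.bijective_iff_injective_and_card]
  refine ⟨fun i j hij => ?_, by simp [ZMod.card]⟩
  have : ((i : ℕ) : ZMod N) = ((j : ℕ) : ZMod N) := by
    exact add_left_cancel hij
  have h4 := congrArg ZMod.val this
  rw [ZMod.val_cast_of_lt i.isLt, ZMod.val_cast_of_lt j.isLt] at h4
  exact Fin.ext h4

lemma key1 (N : ℕ) [NeZero N] (a : ZMod N) :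
    U N a - xv N a * U N (a + 1) = xv N a * (1 - Lam N) := by
  have h1 : xv N a * U N (a + 1)
      = ∑ i ∈ Finset.range N, ∏ j ∈ Finset.range (i + 1 + 1), xv N (a + (j : ℕ)) := by
    rw [U, Finset.mul_sum]
    refine Finset.sum_congr rfl fun i _ => ?_
    rw [Finset.prod_range_succ' (fun j => xv N (a + (j : ℕ))) (i + 1)]
    have : ∀ j : ℕ, xv N (a + ((j + 1 : ℕ) : ZMod N)) = xv N (a + 1 + (j : ℕ)) := by
      intro j; push_cast; ring_nf
    simp only [this, Nat.cast_zero, add_zero]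
    ring
  rw [U, h1, ← Finset.sum_sub_distrib,
    Finset.sum_range_sub' (fun i => ∏ j ∈ Finset.range (i + 1), xv N (a + (j : ℕ)))]
  have hP0 : ∏ j ∈ Finset.range (0 + 1), xv N (a + (j : ℕ)) = xv N a := by simp
  have hPN : ∏ j ∈ Finset.range (N + 1), xv N (a + (j : ℕ)) = Lam N * xv N a := by
    rw [Finset.prod_range_succ, prod_range_xv]
    simp [ZMod.natCast_self]
  rw [hP0, hPN]
  ring

lemma one_sub_lam_ne_zero (N : ℕ) [NeZero N] : 1 - Lam N ≠ 0 := by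
  have hL : Lam N = algebraMap (MvPolynomial (ZMod N) ℚ) (K N) (∏ a : ZMod N, MvPolynomial.X a) := by
    simp [Lam, xv, map_prod]
  rw [hL, sub_ne_zero]
  intro h
  have h2 : (1 : MvPolynomial (ZMod N) ℚ) = ∏ a : ZMod N, MvPolynomial.X a :=
    algebraMap_inj N (by rw [map_one]; exact h)
  have h3 := congrArg (MvPolynomial.eval (fun _ => (0:ℚ))) h2
  simp [map_prod, Finset.prod_const, ZMod.card, NeZero.ne N] at h3

lemma one_sub_xp (N : ℕ) [NeZero N] (a : ZMod N) :
    1 - xp N a = xv N a * (1 - Lam N) / U N a := by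
  rw [xp, eq_div_iff (U_ne_zero N a), sub_mul, one_mul,
    div_mul_cancel₀ _ (U_ne_zero N a), ← key1]

lemma one_sub_xp_ne_zero (N : ℕ) [NeZero N] (a : ZMod N) : 1 - xp N a ≠ 0 := by
  rw [one_sub_xp]
  exact div_ne_zero (mul_ne_zero (xv_ne_zero N a) (one_sub_lam_ne_zero N)) (U_ne_zero N a)

lemma xp_ne_zero (N : ℕ) [NeZero N] (a : ZMod N) : xp N a ≠ 0 := by
  rw [xp]
  exact div_ne_zero (mul_ne_zero (xv_ne_zero N a) (U_ne_zero N (a + 1))) (U_ne_zero N a)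

lemma key2 (N : ℕ) [NeZero N] (a : ZMod N) :
    (1 - xp N (a + 1)) * xp N a = xv N (a + 1) * (1 - xp N a) := by
  have hU1 : U N (a + 1) ≠ 0 := U_ne_zero N (a + 1)
  have hU : U N a ≠ 0 := U_ne_zero N a
  rw [one_sub_xp, one_sub_xp, xp]
  field_simp

/-- **Key identity underlying Lemma 5.1**:
`U_a − x_a U_{a+1} = x_a(1−Λ)`, `(1−x'_{a+1})x'_a = x_{a+1}(1−x'_a)`, and the
substitution identity
`∏_a ((1−x'_{a+1})/(1−x'_a))^{ν_a} · ∏_a (x'_a)^{ν_a} = ∏_a (x_{a+1})^{ν_a}`. -/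
theorem CR_substitution (N : ℕ) [NeZero N] (hN : 1 ≤ N) :
    (∀ a : ZMod N, U N a - xv N a * U N (a + 1) = xv N a * (1 - Lam N))
    ∧ (∀ a : ZMod N, (1 - xp N (a + 1)) * xp N a = xv N (a + 1) * (1 - xp N a))
    ∧ (∀ ν : ZMod N → ℤ,
        (∏ a : ZMod N, ((1 - xp N (a + 1)) / (1 - xp N a)) ^ (ν a))
            * ∏ a : ZMod N, (xp N a) ^ (ν a)
          = ∏ a : ZMod N, (xv N (a + 1)) ^ (ν a)) := by
  refine ⟨key1 N, key2 N, fun ν => ?_⟩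
  have hr : ∀ a : ZMod N, (1 - xp N (a + 1)) / (1 - xp N a) = xv N (a + 1) / xp N a := by
    intro a
    rw [div_eq_div_iff (one_sub_xp_ne_zero N a) (xp_ne_zero N a)]
    exact key2 N a
  rw [← Finset.prod_mul_distrib]
  refine Finset.prod_congr rfl fun a _ => ?_
  rw [hr, div_zpow, div_mul_cancel₀ _ (zpow_ne_zero _ (xp_ne_zero N a))]
end
end

section
/- (Additive form of the f-factor identity, Lemma B.2, equation (B.17).) Let λ, μ be partitions, N ≥ 2 an integer and 1 ≤ k ≤ N−1. Then ∑_{(i,j)∈λ: λ^∨_j−i ≡ k (mod N)} μ_i − ∑_{(i,j)∈λ: λ^∨_j−i ≡ k−1 (mod N)} μ_i + ∑_{(i,j)∈μ: μ^∨_j−i ≡ −k (mod N)} λ_i − ∑_{(i,j)∈μ: μ^∨_j−i ≡ −k−1 (mod N)} λ_i = ∑_{a,b ∈ ℤ/Nℤ, b−a ≡ k} (|μ|_{a−1} − |μ|_a)·(|λ|_{b−1} − |λ|_b), where the left-hand sums run over the cells of the respective Young diagrams. -/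
/-!
Additive form of the f-factor identity, Lemma B.2, equation (B.17).
Partitions `λ, μ` are encoded 0-based as antitone, eventually-zero functions
`f, g : ℕ → ℕ` (`λ_i = f (i−1)`, `μ_i = g (i−1)` for `i ≥ 1`), with bounds
`Bf, Bg` beyond which they vanish.  `cellSum f g N c` is the sum of
`μ_i = g (i−1)` over the cells `(i,j)` of the Young diagram of `λ` with
`λ^∨_j − i ≡ c (mod N)`.  The colored weight `|λ|_m = ∑_{s≥1, s≡m (N)} λ_s`
is realized as the finite sum `wt f Bf N m` below (it only depends on
`m mod N`).  On the right-hand side, `a, b` run over `ℤ/Nℤ` with `b − a ≡ k`.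
-/

noncomputable section

/-- the conjugate partition: `λ^∨_j = #{i₀ ∈ ℕ : f i₀ ≥ j}` (finite for `j ≥ 1`). -/
def conjP (f : ℕ → ℕ) (j : ℕ) : ℕ := Set.ncard {i : ℕ | j ≤ f i}

/-- the sum of `g (i−1)` over the cells `(i,j)` of the Young diagram of `f`
with `λ^∨_j − i ≡ c (mod N)` — a finite sum, realized via `finsum`. -/
def cellSum (f g : ℕ → ℕ) (N : ℕ) (c : ℤ) : ℤ :=
  ∑ᶠ p ∈ {p : ℕ × ℕ | 1 ≤ p.1 ∧ 1 ≤ p.2 ∧ p.2 ≤ f (p.1 - 1) ∧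
      ((conjP f p.2 : ℤ) - (p.1 : ℤ)) ≡ c [ZMOD (N : ℤ)]}, (g (p.1 - 1) : ℤ)

/-- the colored weight `|λ|_m = ∑_{s ≥ 1, s ≡ m (mod N)} λ_s`, computed as a
finite sum using a vanishing bound `B` for `f` (`λ_s = f (s−1)`). -/
def wt (f : ℕ → ℕ) (B N : ℕ) (m : ℤ) : ℤ :=
  ∑ r ∈ Finset.range B, if ((r : ℤ) + 1) ≡ m [ZMOD (N : ℤ)] then (f r : ℤ) else 0

lemma conjP_iff {f : ℕ → ℕ} (hf : Antitone f) {B : ℕ} (hB : ∀ m, B ≤ m → f m = 0)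
    {j : ℕ} (hj : 1 ≤ j) (i : ℕ) : j ≤ f i ↔ i < conjP f j := by
  have hex : ∃ n, f n < j := ⟨B, by rw [hB B le_rfl]; omega⟩
  have key : ∀ i, j ≤ f i ↔ i < Nat.find hex := by
    intro i
    constructor
    · intro h
      by_contra hlt
      push_neg at hlt
      have h1 : f i ≤ f (Nat.find hex) := hf hlt
      have h2 := Nat.find_spec hex
      omega
    · intro h
      have := Nat.find_min hex h
      omega
  have hset : {i : ℕ | j ≤ f i} = Set.Iio (Nat.find hex) := by
    ext i; simpa using key i
  have hc : conjP f j = Nat.find hex := by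
    rw [conjP, hset, ← Finset.coe_range, Set.ncard_coe_finset, Finset.card_range]
  rw [hc]; exact key i

lemma conjP_val {f : ℕ → ℕ} (hf : Antitone f) {B : ℕ} (hB : ∀ m, B ≤ m → f m = 0)
    {t j : ℕ} (h1 : f (t + 1) < j) (h2 : j ≤ f t) : conjP f j = t + 1 := by
  have hj : 1 ≤ j := by omega
  have a1 := (conjP_iff hf hB hj t).mp h2
  have a2 := (conjP_iff hf hB hj (t + 1)).not.mp (by omega)
  omega

lemma sum_conj {f : ℕ → ℕ} (hf : Antitone f) {B : ℕ} (hB : ∀ m, B ≤ m → f m = 0)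
    (F : ℕ → ℤ) : ∀ n i₀, B ≤ i₀ + n →
    ∑ j ∈ Finset.Ioc 0 (f i₀), F (conjP f j)
      = ∑ t ∈ Finset.Ico i₀ B, F (t + 1) * ((f t : ℤ) - (f (t + 1) : ℤ)) := by
  intro n
  induction n with
  | zero =>
    intro i₀ h
    rw [hB i₀ (by omega), Finset.Ico_eq_empty (by omega)]
    simp
  | succ n ih =>
    intro i₀ h
    by_cases hi : B ≤ i₀
    · rw [hB i₀ hi, Finset.Ico_eq_empty (by omega)]; simp
    push_neg at hi
    have hle : f (i₀ + 1) ≤ f i₀ := hf (by omega)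
    rw [← Finset.sum_Ioc_consecutive (fun j => F (conjP f j)) (Nat.zero_le (f (i₀ + 1))) hle,
      ih (i₀ + 1) (by omega)]
    have hconst : ∑ j ∈ Finset.Ioc (f (i₀ + 1)) (f i₀), F (conjP f j)
        = F (i₀ + 1) * ((f i₀ : ℤ) - (f (i₀ + 1) : ℤ)) := by
      have h1 : ∀ j ∈ Finset.Ioc (f (i₀ + 1)) (f i₀), F (conjP f j) = F (i₀ + 1) := by
        intro j hj
        simp only [Finset.mem_Ioc] at hj
        rw [conjP_val hf hB hj.1 hj.2]
      rw [Finset.sum_congr rfl h1, Finset.sum_const, Nat.card_Ioc, nsmul_eq_mul,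
        Nat.cast_sub hle]
      ring
    rw [hconst, Finset.sum_eq_sum_Ico_succ_bot hi]
    ring

lemma cellSum_eq (f g : ℕ → ℕ) (hf : Antitone f) {B : ℕ} (hB : ∀ m, B ≤ m → f m = 0)
    (N : ℕ) (c : ℤ) :
    cellSum f g N c = ∑ i ∈ Finset.range B, ∑ t ∈ Finset.Ico i B,
      (if ((t : ℤ) + 1) - ((i : ℤ) + 1) ≡ c [ZMOD (N : ℤ)] then
        (g i : ℤ) * ((f t : ℤ) - (f (t + 1) : ℤ)) else 0) := by
  classical
  rw [cellSum]
  have hS : {p : ℕ × ℕ | 1 ≤ p.1 ∧ 1 ≤ p.2 ∧ p.2 ≤ f (p.1 - 1) ∧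
      ((conjP f p.2 : ℤ) - (p.1 : ℤ)) ≡ c [ZMOD (N : ℤ)]}
      = ↑((Finset.Ioc 0 B ×ˢ Finset.Ioc 0 (f 0)).filter
          (fun p => p.2 ≤ f (p.1 - 1) ∧ ((conjP f p.2 : ℤ) - (p.1 : ℤ)) ≡ c [ZMOD (N : ℤ)])) := by
    ext p
    simp only [Set.mem_setOf_eq, Finset.coe_filter, Finset.mem_product, Finset.mem_Ioc]
    constructor
    · rintro ⟨h1, h2, h3, h4⟩
      have hp1 : p.1 ≤ B := by
        by_contra hgt
        push_neg at hgt
        have : f (p.1 - 1) = 0 := hB _ (by omega)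
        omega
      exact ⟨⟨⟨h1, hp1⟩, h2, le_trans h3 (hf (Nat.zero_le _))⟩, h3, h4⟩
    · rintro ⟨⟨⟨h1, _⟩, h2, _⟩, h3, h4⟩
      exact ⟨h1, h2, h3, h4⟩
  rw [hS, finsum_mem_coe_finset, Finset.sum_filter, Finset.sum_product]
  have hIoc : Finset.Ioc 0 B = Finset.Ico 1 (B + 1) := by
    ext x; simp [Finset.mem_Ioc, Finset.mem_Ico]; omega
  rw [hIoc, Finset.sum_Ico_eq_sum_range]
  simp only [Nat.add_sub_cancel, Nat.add_sub_cancel_left]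
  refine Finset.sum_congr rfl fun i hi => ?_
  simp only [Finset.mem_range] at hi
  have hstep1 : ∑ j ∈ Finset.Ioc 0 (f 0),
      (if j ≤ f i ∧ ((conjP f j : ℤ) - ((1 + i : ℕ) : ℤ)) ≡ c [ZMOD (N : ℤ)]
        then (g i : ℤ) else 0)
      = ∑ j ∈ Finset.Ioc 0 (f i),
        (if ((conjP f j : ℤ) - ((1 + i : ℕ) : ℤ)) ≡ c [ZMOD (N : ℤ)] then (g i : ℤ) else 0) := by
    have hsub : f i ≤ f 0 := hf (Nat.zero_le _)
    rw [← Finset.sum_filter, ← Finset.sum_filter]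
    congr 1
    ext j
    simp only [Finset.mem_filter, Finset.mem_Ioc]
    constructor
    · rintro ⟨⟨hj0, _⟩, hj1, hj2⟩; exact ⟨⟨hj0, hj1⟩, hj2⟩
    · rintro ⟨⟨hj0, hj1⟩, hj2⟩; exact ⟨⟨hj0, by omega⟩, hj1, hj2⟩
  rw [hstep1, sum_conj hf hB (fun t => if ((t : ℤ) - ((1 + i : ℕ) : ℤ)) ≡ c [ZMOD (N : ℤ)]
      then (g i : ℤ) else 0) B i (by omega)]
  refine Finset.sum_congr rfl fun t ht => ?_
  have harg : (((t : ℕ) + 1 : ℕ) : ℤ) - ((1 + i : ℕ) : ℤ) = ((t : ℤ) + 1) - ((i : ℤ) + 1) := by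
    push_cast; ring
  rw [harg]
  split_ifs with h
  · rfl
  · simp

lemma ico_to_range {B : ℕ} (a : ℕ) (X : ℕ → ℤ) :
    ∑ t ∈ Finset.Ico a B, X t = ∑ t ∈ Finset.range B, if a ≤ t then X t else 0 := by
  rw [Finset.sum_ite, Finset.sum_const_zero, add_zero]
  apply Finset.sum_congr _ (fun _ _ => rfl)
  ext t
  simp only [Finset.mem_Ico, Finset.mem_filter, Finset.mem_range]
  omega

lemma cellSum_eq2 (f g : ℕ → ℕ) (hf : Antitone f) {B : ℕ} (hB : ∀ m, B ≤ m → f m = 0)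
    (N : ℕ) (c : ℤ) :
    cellSum f g N c = ∑ i ∈ Finset.range B, ∑ t ∈ Finset.range B, (g i : ℤ) * (f t : ℤ) *
      ((if i ≤ t then 1 else 0) *
          (if ((t : ℤ) + 1) - ((i : ℤ) + 1) ≡ c [ZMOD (N : ℤ)] then 1 else 0)
        - (if i + 1 ≤ t then 1 else 0) *
          (if (t : ℤ) - ((i : ℤ) + 1) ≡ c [ZMOD (N : ℤ)] then 1 else 0)) := by
  classical
  rw [cellSum_eq f g hf hB N c]
  refine Finset.sum_congr rfl fun i hi => ?_
  simp only [Finset.mem_range] at hi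
  have step1 : ∑ t ∈ Finset.Ico i B,
      (if ((t : ℤ) + 1) - ((i : ℤ) + 1) ≡ c [ZMOD (N : ℤ)] then
        (g i : ℤ) * ((f t : ℤ) - (f (t + 1) : ℤ)) else 0)
      = (∑ t ∈ Finset.Ico i B, (g i : ℤ) * (f t : ℤ) *
          (if ((t : ℤ) + 1) - ((i : ℤ) + 1) ≡ c [ZMOD (N : ℤ)] then 1 else 0))
        - ∑ t ∈ Finset.Ico i B, (g i : ℤ) * (f (t + 1) : ℤ) *
          (if (((t + 1 : ℕ) : ℤ)) - ((i : ℤ) + 1) ≡ c [ZMOD (N : ℤ)] then 1 else 0) := by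
    rw [← Finset.sum_sub_distrib]
    refine Finset.sum_congr rfl fun t ht => ?_
    have : (((t + 1 : ℕ) : ℤ)) - ((i : ℤ) + 1) = ((t : ℤ) + 1) - ((i : ℤ) + 1) := by
      push_cast; ring
    rw [this]
    split_ifs <;> ring
  rw [step1]
  have step2 : ∑ t ∈ Finset.Ico i B, (g i : ℤ) * (f (t + 1) : ℤ) *
        (if (((t + 1 : ℕ) : ℤ)) - ((i : ℤ) + 1) ≡ c [ZMOD (N : ℤ)] then 1 else 0)
      = ∑ t ∈ Finset.Ico (i + 1) B, (g i : ℤ) * (f t : ℤ) *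
        (if ((t : ℤ)) - ((i : ℤ) + 1) ≡ c [ZMOD (N : ℤ)] then 1 else 0) := by
    rw [Finset.sum_Ico_add' (fun t => (g i : ℤ) * (f t : ℤ) *
        (if ((t : ℤ)) - ((i : ℤ) + 1) ≡ c [ZMOD (N : ℤ)] then 1 else 0)) i B 1]
    rw [Finset.sum_Ico_succ_top (by omega : i + 1 ≤ B)]
    rw [hB B le_rfl]
    simp
  rw [step2, ico_to_range, ico_to_range, ← Finset.sum_sub_distrib]
  refine Finset.sum_congr rfl fun t ht => ?_
  split_ifs <;> ring

lemma wt_congr {g : ℕ → ℕ} {Bg B : ℕ} (hBg : ∀ m, Bg ≤ m → g m = 0) (h : Bg ≤ B)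
    (N : ℕ) (m : ℤ) : wt g Bg N m = wt g B N m := by
  rw [wt, wt]
  apply Finset.sum_subset (Finset.range_subset_range.mpr h)
  intro r hr hr'
  simp only [Finset.mem_range] at hr hr'
  rw [hBg r (by omega)]
  simp

lemma sum_ind {N : ℕ} [NeZero N] (u v : ZMod N) (x y : ℤ) :
    ∑ a : ZMod N, (if a = u then x else 0) * (if a = v then y else 0)
      = if u = v then x * y else 0 := by
  have : ∀ a : ZMod N, (if a = u then x else 0) * (if a = v then y else 0)
      = if a = u then (x * if u = v then y else 0) else 0 := by
    intro a
    split_ifs with h1 h2 h3 <;> simp_all <;> ring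
  simp only [this]
  rw [Finset.sum_ite_eq' Finset.univ u]
  simp [mul_ite]

lemma scalar {N : ℕ} [NeZero N] (hN : 2 ≤ N) (k s t : ℕ) (x y : ℤ) :
    x * y * ((if s ≤ t then (1 : ℤ) else 0) *
          (if ((t : ℤ) + 1) - ((s : ℤ) + 1) ≡ (k : ℤ) [ZMOD (N : ℤ)] then 1 else 0)
        - (if s + 1 ≤ t then (1 : ℤ) else 0) *
          (if (t : ℤ) - ((s : ℤ) + 1) ≡ (k : ℤ) [ZMOD (N : ℤ)] then 1 else 0))
      - x * y * ((if s ≤ t then (1 : ℤ) else 0) *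
          (if ((t : ℤ) + 1) - ((s : ℤ) + 1) ≡ (k : ℤ) - 1 [ZMOD (N : ℤ)] then 1 else 0)
        - (if s + 1 ≤ t then (1 : ℤ) else 0) *
          (if (t : ℤ) - ((s : ℤ) + 1) ≡ (k : ℤ) - 1 [ZMOD (N : ℤ)] then 1 else 0))
      + y * x * ((if t ≤ s then (1 : ℤ) else 0) *
          (if ((s : ℤ) + 1) - ((t : ℤ) + 1) ≡ -(k : ℤ) [ZMOD (N : ℤ)] then 1 else 0)
        - (if t + 1 ≤ s then (1 : ℤ) else 0) *
          (if (s : ℤ) - ((t : ℤ) + 1) ≡ -(k : ℤ) [ZMOD (N : ℤ)] then 1 else 0))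
      - y * x * ((if t ≤ s then (1 : ℤ) else 0) *
          (if ((s : ℤ) + 1) - ((t : ℤ) + 1) ≡ -(k : ℤ) - 1 [ZMOD (N : ℤ)] then 1 else 0)
        - (if t + 1 ≤ s then (1 : ℤ) else 0) *
          (if (s : ℤ) - ((t : ℤ) + 1) ≡ -(k : ℤ) - 1 [ZMOD (N : ℤ)] then 1 else 0))
    = ∑ a : ZMod N,
        ((if ((s : ℤ) + 1) ≡ (a.val : ℤ) - 1 [ZMOD (N : ℤ)] then x else 0)
            - (if ((s : ℤ) + 1) ≡ (a.val : ℤ) [ZMOD (N : ℤ)] then x else 0))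
          * ((if ((t : ℤ) + 1) ≡ ((((k : ZMod N) + a).val : ℤ)) - 1 [ZMOD (N : ℤ)] then y else 0)
            - (if ((t : ℤ) + 1) ≡ ((((k : ZMod N) + a).val : ℤ)) [ZMOD (N : ℤ)] then y else 0)) := by
  classical
  set S : ZMod N := (s : ZMod N) with hS
  set T : ZMod N := (t : ZMod N) with hT
  set K : ZMod N := (k : ZMod N) with hK
  -- convert all modular conditions to ZMod equalities P, Q, R
  have c1 : (((t : ℤ) + 1) - ((s : ℤ) + 1) ≡ (k : ℤ) [ZMOD (N : ℤ)]) ↔ (T + 1 = S + 1 + K) := by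
    rw [← ZMod.intCast_eq_intCast_iff]; push_cast
    constructor <;> intro h <;> linear_combination h
  have c2 : (((t : ℤ) + 1) - ((s : ℤ) + 1) ≡ (k : ℤ) - 1 [ZMOD (N : ℤ)]) ↔ (T + 1 = S + K) := by
    rw [← ZMod.intCast_eq_intCast_iff]; push_cast
    constructor <;> intro h <;> linear_combination h
  have c3 : ((t : ℤ) - ((s : ℤ) + 1) ≡ (k : ℤ) [ZMOD (N : ℤ)]) ↔ (T + 1 = S + 2 + K) := by
    rw [← ZMod.intCast_eq_intCast_iff]; push_cast
    constructor <;> intro h <;> linear_combination h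
  have c4 : ((t : ℤ) - ((s : ℤ) + 1) ≡ (k : ℤ) - 1 [ZMOD (N : ℤ)]) ↔ (T + 1 = S + 1 + K) := by
    rw [← ZMod.intCast_eq_intCast_iff]; push_cast
    constructor <;> intro h <;> linear_combination h
  have c5 : (((s : ℤ) + 1) - ((t : ℤ) + 1) ≡ -(k : ℤ) [ZMOD (N : ℤ)]) ↔ (T + 1 = S + 1 + K) := by
    rw [← ZMod.intCast_eq_intCast_iff]; push_cast
    constructor <;> intro h <;> linear_combination -h
  have c6 : (((s : ℤ) + 1) - ((t : ℤ) + 1) ≡ -(k : ℤ) - 1 [ZMOD (N : ℤ)]) ↔ (T + 1 = S + 2 + K) := by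
    rw [← ZMod.intCast_eq_intCast_iff]; push_cast
    constructor <;> intro h <;> linear_combination -h
  have c7 : ((s : ℤ) - ((t : ℤ) + 1) ≡ -(k : ℤ) [ZMOD (N : ℤ)]) ↔ (T + 1 = S + K) := by
    rw [← ZMod.intCast_eq_intCast_iff]; push_cast
    constructor <;> intro h <;> linear_combination -h
  have c8 : ((s : ℤ) - ((t : ℤ) + 1) ≡ -(k : ℤ) - 1 [ZMOD (N : ℤ)]) ↔ (T + 1 = S + 1 + K) := by
    rw [← ZMod.intCast_eq_intCast_iff]; push_cast
    constructor <;> intro h <;> linear_combination -h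
  have d1 : ∀ a : ZMod N, (((s : ℤ) + 1) ≡ (a.val : ℤ) - 1 [ZMOD (N : ℤ)]) ↔ (a = S + 2) := by
    intro a
    rw [← ZMod.intCast_eq_intCast_iff]; push_cast [ZMod.natCast_val, ZMod.cast_id]
    constructor <;> intro h <;> linear_combination -h
  have d2 : ∀ a : ZMod N, (((s : ℤ) + 1) ≡ (a.val : ℤ) [ZMOD (N : ℤ)]) ↔ (a = S + 1) := by
    intro a
    rw [← ZMod.intCast_eq_intCast_iff]; push_cast [ZMod.natCast_val, ZMod.cast_id]
    constructor <;> intro h <;> linear_combination -h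
  have d3 : ∀ a : ZMod N, (((t : ℤ) + 1) ≡ (((K + a).val : ℤ)) - 1 [ZMOD (N : ℤ)])
      ↔ (a = T + 2 - K) := by
    intro a
    rw [← ZMod.intCast_eq_intCast_iff]; push_cast [ZMod.natCast_val, ZMod.cast_id]
    constructor <;> intro h <;> linear_combination -h
  have d4 : ∀ a : ZMod N, (((t : ℤ) + 1) ≡ (((K + a).val : ℤ)) [ZMOD (N : ℤ)])
      ↔ (a = T + 1 - K) := by
    intro a
    rw [← ZMod.intCast_eq_intCast_iff]; push_cast [ZMod.natCast_val, ZMod.cast_id]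
    constructor <;> intro h <;> linear_combination -h
  simp only [c1, c2, c3, c4, c5, c6, c7, c8, d1, d2, d3, d4]
  simp only [sub_mul, mul_sub, Finset.sum_sub_distrib, sum_ind]
  have e1 : (S + 2 = T + 2 - K) ↔ (T + 1 = S + 1 + K) :=
    ⟨fun h => by linear_combination -h, fun h => by linear_combination -h⟩
  have e2 : (S + 2 = T + 1 - K) ↔ (T + 1 = S + 2 + K) :=
    ⟨fun h => by linear_combination -h, fun h => by linear_combination -h⟩
  have e3 : (S + 1 = T + 2 - K) ↔ (T + 1 = S + K) :=
    ⟨fun h => by linear_combination -h, fun h => by linear_combination -h⟩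
  have e4 : (S + 1 = T + 1 - K) ↔ (T + 1 = S + 1 + K) :=
    ⟨fun h => by linear_combination -h, fun h => by linear_combination -h⟩
  simp only [e1, e2, e3, e4]
  rcases Nat.lt_trichotomy s t with h | h | h
  · simp only [show (if s ≤ t then (1 : ℤ) else 0) = 1 from if_pos (by omega),
      show (if s + 1 ≤ t then (1 : ℤ) else 0) = 1 from if_pos (by omega),
      show (if t ≤ s then (1 : ℤ) else 0) = 0 from if_neg (by omega),
      show (if t + 1 ≤ s then (1 : ℤ) else 0) = 0 from if_neg (by omega)]
    split_ifs <;> ring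
  · simp only [show (if s ≤ t then (1 : ℤ) else 0) = 1 from if_pos (by omega),
      show (if s + 1 ≤ t then (1 : ℤ) else 0) = 0 from if_neg (by omega),
      show (if t ≤ s then (1 : ℤ) else 0) = 1 from if_pos (by omega),
      show (if t + 1 ≤ s then (1 : ℤ) else 0) = 0 from if_neg (by omega)]
    split_ifs <;> ring
  · simp only [show (if s ≤ t then (1 : ℤ) else 0) = 0 from if_neg (by omega),
      show (if s + 1 ≤ t then (1 : ℤ) else 0) = 0 from if_neg (by omega),
      show (if t ≤ s then (1 : ℤ) else 0) = 1 from if_pos (by omega),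
      show (if t + 1 ≤ s then (1 : ℤ) else 0) = 1 from if_pos (by omega)]
    split_ifs <;> ring

/-- **Lemma B.2, equation (B.17)** (additive form of the f-factor identity). -/
theorem f_factor_identity (f g : ℕ → ℕ) (hf : Antitone f) (hg : Antitone g)
    (Bf Bg : ℕ) (hBf : ∀ m, Bf ≤ m → f m = 0) (hBg : ∀ m, Bg ≤ m → g m = 0)
    (N : ℕ) [NeZero N] (hN : 2 ≤ N) (k : ℕ) (hk1 : 1 ≤ k) (hk2 : k ≤ N - 1) :
    cellSum f g N (k : ℤ) - cellSum f g N ((k : ℤ) - 1)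
        + cellSum g f N (-(k : ℤ)) - cellSum g f N (-(k : ℤ) - 1)
      = ∑ a : ZMod N, ∑ b : ZMod N,
          if b - a = (k : ZMod N) then
            (wt g Bg N ((a.val : ℤ) - 1) - wt g Bg N (a.val : ℤ))
              * (wt f Bf N ((b.val : ℤ) - 1) - wt f Bf N (b.val : ℤ))
          else 0 := by
  classical
  set B : ℕ := max Bf Bg with hBdef
  have hBf' : ∀ m, B ≤ m → f m = 0 := fun m hm => hBf m (le_trans (le_max_left _ _) hm)
  have hBg' : ∀ m, B ≤ m → g m = 0 := fun m hm => hBg m (le_trans (le_max_right _ _) hm)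
  have hwf : ∀ m : ℤ, wt f Bf N m = wt f B N m := wt_congr hBf (le_max_left _ _) N
  have hwg : ∀ m : ℤ, wt g Bg N m = wt g B N m := wt_congr hBg (le_max_right _ _) N
  -- the four cell sums, in rectangular form
  have E : ∀ c : ℤ, cellSum f g N c = ∑ i ∈ Finset.range B, ∑ t ∈ Finset.range B,
      (g i : ℤ) * (f t : ℤ) *
      ((if i ≤ t then 1 else 0) *
          (if ((t : ℤ) + 1) - ((i : ℤ) + 1) ≡ c [ZMOD (N : ℤ)] then 1 else 0)
        - (if i + 1 ≤ t then 1 else 0) *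
          (if (t : ℤ) - ((i : ℤ) + 1) ≡ c [ZMOD (N : ℤ)] then 1 else 0)) :=
    fun c => cellSum_eq2 f g hf hBf' N c
  have E' : ∀ c : ℤ, cellSum g f N c = ∑ s ∈ Finset.range B, ∑ t ∈ Finset.range B,
      (f t : ℤ) * (g s : ℤ) *
      ((if t ≤ s then 1 else 0) *
          (if ((s : ℤ) + 1) - ((t : ℤ) + 1) ≡ c [ZMOD (N : ℤ)] then 1 else 0)
        - (if t + 1 ≤ s then 1 else 0) *
          (if (s : ℤ) - ((t : ℤ) + 1) ≡ c [ZMOD (N : ℤ)] then 1 else 0)) := by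
    intro c
    rw [cellSum_eq2 g f hg hBg' N c]
    exact Finset.sum_comm
  rw [E (k : ℤ), E ((k : ℤ) - 1), E' (-(k : ℤ)), E' (-(k : ℤ) - 1)]
  -- rewrite the right-hand side
  have hR : (∑ a : ZMod N, ∑ b : ZMod N,
          if b - a = (k : ZMod N) then
            (wt g Bg N ((a.val : ℤ) - 1) - wt g Bg N (a.val : ℤ))
              * (wt f Bf N ((b.val : ℤ) - 1) - wt f Bf N (b.val : ℤ))
          else 0)
      = ∑ s ∈ Finset.range B, ∑ t ∈ Finset.range B, ∑ a : ZMod N,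
        ((if ((s : ℤ) + 1) ≡ (a.val : ℤ) - 1 [ZMOD (N : ℤ)] then (g s : ℤ) else 0)
            - (if ((s : ℤ) + 1) ≡ (a.val : ℤ) [ZMOD (N : ℤ)] then (g s : ℤ) else 0))
          * ((if ((t : ℤ) + 1) ≡ ((((k : ZMod N) + a).val : ℤ)) - 1 [ZMOD (N : ℤ)]
              then (f t : ℤ) else 0)
            - (if ((t : ℤ) + 1) ≡ ((((k : ZMod N) + a).val : ℤ)) [ZMOD (N : ℤ)]
              then (f t : ℤ) else 0)) := by
    simp only [hwf, hwg]
    have step1 : ∀ a : ZMod N, (∑ b : ZMod N,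
        if b - a = (k : ZMod N) then
          (wt g B N ((a.val : ℤ) - 1) - wt g B N (a.val : ℤ))
            * (wt f B N ((b.val : ℤ) - 1) - wt f B N (b.val : ℤ))
        else 0)
        = (wt g B N ((a.val : ℤ) - 1) - wt g B N (a.val : ℤ))
            * (wt f B N (((((k : ZMod N) + a)).val : ℤ) - 1)
              - wt f B N ((((k : ZMod N) + a)).val : ℤ)) := by
      intro a
      simp only [sub_eq_iff_eq_add]
      rw [Finset.sum_ite_eq' Finset.univ ((k : ZMod N) + a)
        (fun b => (wt g B N ((a.val : ℤ) - 1) - wt g B N (a.val : ℤ))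
            * (wt f B N ((b.val : ℤ) - 1) - wt f B N (b.val : ℤ)))]
      simp
    simp only [step1]
    have step2 : ∀ a : ZMod N,
        (wt g B N ((a.val : ℤ) - 1) - wt g B N (a.val : ℤ))
            * (wt f B N (((((k : ZMod N) + a)).val : ℤ) - 1)
              - wt f B N ((((k : ZMod N) + a)).val : ℤ))
        = ∑ s ∈ Finset.range B, ∑ t ∈ Finset.range B,
          ((if ((s : ℤ) + 1) ≡ (a.val : ℤ) - 1 [ZMOD (N : ℤ)] then (g s : ℤ) else 0)
              - (if ((s : ℤ) + 1) ≡ (a.val : ℤ) [ZMOD (N : ℤ)] then (g s : ℤ) else 0))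
            * ((if ((t : ℤ) + 1) ≡ ((((k : ZMod N) + a).val : ℤ)) - 1 [ZMOD (N : ℤ)]
                then (f t : ℤ) else 0)
              - (if ((t : ℤ) + 1) ≡ ((((k : ZMod N) + a).val : ℤ)) [ZMOD (N : ℤ)]
                then (f t : ℤ) else 0)) := by
      intro a
      rw [wt, wt, wt, wt, ← Finset.sum_sub_distrib, ← Finset.sum_sub_distrib,
        Finset.sum_mul_sum]
    simp only [step2]
    rw [Finset.sum_comm]
    refine Finset.sum_congr rfl fun s _ => Finset.sum_comm
  rw [hR]
  simp only [← Finset.sum_sub_distrib, ← Finset.sum_add_distrib]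
  refine Finset.sum_congr rfl fun s _ => Finset.sum_congr rfl fun t _ => ?_
  exact scalar hN k s t (g s : ℤ) (f t : ℤ)
end
end
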